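/- arXiv:1407.4734 — 8 statements merged into one kernel-verified Lean document; each statement's English description precedes it below -/
import Mathlib

section
/- Let g : ℤ → ℤ satisfy g(k) ≤ 1 for all k. Fix b ∈ ℤ with g(b) < 0, and suppose there exists k < b with ∑_{n=k}^{b} g(n) ≥ 0; let a be the largest such k. For each k with a ≤ k ≤ b, the set {n ≥ k : ∑_{j=k}^{n} g(j) ≤ 0} is nonempty and contains an element ≤ b; define τ(k) to be its minimum. Then for every z with a ≤ z ≤ b, the number of indices k with a ≤ k ≤ b, g(k) = 1 and τ(k) = z equals max(−g(z), 0). -/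
/-!
Let `W n = ∑_{j=a}^{n} g j`. Since `g ≤ 1`, the walk `W` climbs at most one level per step,
and `τ k` is the first time `≥ k` at which `W` is back at or below level `W (k - 1)`. Sending an
up-step `k` with `τ k = z` to the level `W (k - 1)` is then a bijection onto the levels in
`[W z, W (z - 1))`: distinct such up-steps start from distinct levels, and conversely a level is
hit by the last step up from it before `z`, which exists because `W` cannot skip levels. Hence
the count is `W (z - 1) - W z = -g z` when `g z ≤ 0`, and `0` otherwise. The maximality of `a`
makes `[a, b]` an excursion of `W` above `0`, which gives `τ k ≤ b` and `W (a - 1) ≤ W z`.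
-/

open Finset

lemma sum_Icc_consecutive {M : Type*} [AddCommMonoid M] (f : ℤ → M) {a k n : ℤ}
    (hak : a ≤ k) (hkn : k ≤ n + 1) :
    ∑ j ∈ Icc a (k - 1), f j + ∑ j ∈ Icc k n, f j = ∑ j ∈ Icc a n, f j := by
  rw [← sum_union (disjoint_left.2 fun j hj hj' => by simp only [mem_Icc] at hj hj'; omega)]
  congr 1
  ext j
  simp only [mem_union, mem_Icc]
  omega

section Walk

variable {W : ℤ → ℤ}

theorem isLeast_firstPassage_iff {k t : ℤ} :
    IsLeast {n | k ≤ n ∧ W n ≤ W (k - 1)} t ↔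
      k ≤ t ∧ W t ≤ W (k - 1) ∧ ∀ n, k ≤ n → n < t → W (k - 1) < W n := by
  refine ⟨fun ⟨ht, hmin⟩ => ⟨ht.1, ht.2, fun n hkn hnt => ?_⟩,
    fun ⟨hkt, ht, hlt⟩ => ⟨⟨hkt, ht⟩, fun n ⟨hkn, hn⟩ => ?_⟩⟩
  · by_contra! hle
    exact (hmin ⟨hkn, hle⟩).not_gt hnt
  · by_contra! hnt
    exact (hlt n hkn hnt).not_ge hn

theorem exists_last_visit_of_skipFree {c d ℓ : ℤ} (hW : ∀ n, c < n → W n ≤ W (n - 1) + 1)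
    (hcd : c ≤ d) (hc : W c ≤ ℓ) (hd : ℓ < W d) :
    ∃ m, c ≤ m ∧ m < d ∧ W m = ℓ ∧ ∀ n, m < n → n ≤ d → ℓ < W n := by
  induction d, hcd using Int.leInduction with
  | base => omega
  | succ d hcd ih =>
    have hstep := hW (d + 1) (by omega)
    rw [add_sub_cancel_right] at hstep
    by_cases hd' : ℓ < W d
    · obtain ⟨m, hcm, hmd, hm, hlt⟩ := ih hd'
      refine ⟨m, hcm, by omega, hm, fun n hmn hnd => ?_⟩
      rcases Int.le_add_one_iff.1 hnd with hnd | rfl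
      exacts [hlt n hmn hnd, hd]
    · refine ⟨d, hcd, by omega, by omega, fun n hdn hnd => ?_⟩
      obtain rfl : n = d + 1 := by omega
      exact hd

theorem exists_upStep_firstPassage_eq {a z ℓ : ℤ} (hW : ∀ n, a ≤ n → W n ≤ W (n - 1) + 1)
    (haz : a ≤ z) (hstart : W (a - 1) ≤ W z) (hzℓ : W z ≤ ℓ) (hℓz : ℓ < W (z - 1)) :
    ∃ k, a ≤ k ∧ k < z ∧ W k = W (k - 1) + 1 ∧ W (k - 1) = ℓ ∧
      IsLeast {n | k ≤ n ∧ W n ≤ W (k - 1)} z := by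
  obtain ⟨m, ham, hmz, rfl, hlt⟩ := exists_last_visit_of_skipFree (c := a - 1) (d := z - 1)
    (fun n hn => hW n (by omega)) (by omega) (hstart.trans hzℓ) hℓz
  have hup := hW (m + 1) (by omega)
  refine ⟨m + 1, by omega, by omega, ?_⟩
  have hτ := isLeast_firstPassage_iff (W := W) (k := m + 1) (t := z)
  rw [add_sub_cancel_right] at hup hτ ⊢
  exact ⟨by linarith [hlt (m + 1) (by omega) (by omega)], rfl,
    hτ.2 ⟨by omega, hzℓ, fun n h1 h2 => hlt n (by omega) (by omega)⟩⟩

theorem card_filter_upStep_firstPassage {a e z : ℤ} (hW : ∀ n, a ≤ n → W n ≤ W (n - 1) + 1)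
    (haz : a ≤ z) (hze : z ≤ e) (hstart : W (a - 1) ≤ W z) (τ : ℤ → ℤ)
    (hτ : ∀ k, a ≤ k → k ≤ e → IsLeast {n | k ≤ n ∧ W n ≤ W (k - 1)} (τ k)) :
    #{k ∈ Icc a e | W k = W (k - 1) + 1 ∧ τ k = z} = (W (z - 1) - W z).toNat := by
  set S := {k ∈ Icc a e | W k = W (k - 1) + 1 ∧ τ k = z}
  have hS : ∀ k ∈ S, k < z ∧ W z ≤ W (k - 1) ∧ ∀ n, k ≤ n → n < z → W (k - 1) < W n := by
    intro k hk
    simp only [S, mem_filter, mem_Icc] at hk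
    obtain ⟨⟨hak, hke⟩, hup, rfl⟩ := hk
    obtain ⟨hkz, hz, hlt⟩ := isLeast_firstPassage_iff.1 (hτ k hak hke)
    exact ⟨lt_of_le_of_ne hkz fun h => by rw [← h] at hz; omega, hz, hlt⟩
  have hmono : StrictMonoOn (fun k => W (k - 1)) S := fun k hk k' hk' hkk' =>
    (hS k hk).2.2 (k' - 1) (by omega) (by linarith [(hS k' hk').1])
  rw [← Int.card_Ico]
  refine card_nbij (fun k => W (k - 1)) (fun k hk => ?_) hmono.injOn fun ℓ hℓ => ?_
  · obtain ⟨hkz, hz, hlt⟩ := hS k hk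
    simpa only [coe_Ico, Set.mem_Ico] using ⟨hz, hlt (z - 1) (by omega) (by omega)⟩
  simp only [coe_Ico, Set.mem_Ico] at hℓ
  obtain ⟨k, hak, hkz, hup, rfl, hτk⟩ := exists_upStep_firstPassage_eq hW haz hstart hℓ.1 hℓ.2
  refine ⟨k, ?_, rfl⟩
  simp only [S, coe_filter, mem_Icc, Set.mem_ofPred_eq]
  exact ⟨⟨hak, by omega⟩, hup, (hτ k hak (by omega)).unique hτk⟩

end Walk

section Excursion

variable {g : ℤ → ℤ} {a b : ℤ}

theorem sum_Icc_neg_of_isGreatest (hb : g b < 0)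
    (ha : IsGreatest {k | k < b ∧ 0 ≤ ∑ n ∈ Icc k b, g n} a) {k : ℤ} (hak : a < k) (hkb : k ≤ b) :
    ∑ n ∈ Icc k b, g n < 0 := by
  rcases hkb.lt_or_eq with hkb | rfl
  · exact lt_of_not_ge fun h => (ha.2 ⟨hkb, h⟩).not_gt hak
  · simpa using hb

theorem sum_Icc_nonpos_of_isGreatest (hg : ∀ k, g k ≤ 1) (hb : g b < 0)
    (ha : IsGreatest {k | k < b ∧ 0 ≤ ∑ n ∈ Icc k b, g n} a) {k : ℤ} (hak : a ≤ k) (hkb : k ≤ b) :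
    ∑ n ∈ Icc k b, g n ≤ 0 := by
  rcases hak.lt_or_eq with hak | rfl
  · exact (sum_Icc_neg_of_isGreatest hb ha hak hkb).le
  · rw [Icc_eq_cons_Ioc hkb, sum_cons, ← Icc_add_one_left_eq_Ioc]
    linarith [hg a, sum_Icc_neg_of_isGreatest hb ha (lt_add_one a) (by linarith [ha.1.1])]

theorem sum_Icc_nonneg_of_isGreatest (hb : g b < 0)
    (ha : IsGreatest {k | k < b ∧ 0 ≤ ∑ n ∈ Icc k b, g n} a) {z : ℤ} (haz : a ≤ z) (hzb : z ≤ b) :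
    0 ≤ ∑ n ∈ Icc a z, g n := by
  rcases hzb.lt_or_eq with hzb | rfl
  · have hsplit := sum_Icc_consecutive g (a := a) (k := z + 1) (n := b) (by omega) (by omega)
    rw [add_sub_cancel_right] at hsplit
    linarith [ha.1.2, sum_Icc_neg_of_isGreatest hb ha (by omega) hzb]
  · exact ha.1.2

end Excursion

/-- **Pathwise allocation lemma** (Lemma 3.2, rescaled integer form).
Let `g : ℤ → ℤ` with `g k ≤ 1` for all `k`, let `b` satisfy `g b < 0`, and let `a` be the
largest `k < b` with `∑_{n=k}^{b} g n ≥ 0` (assumed to exist).  For `a ≤ k ≤ b` the set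
`{n ≥ k : ∑_{j=k}^{n} g j ≤ 0}` is nonempty with an element `≤ b`; if `τ k` denotes its
minimum, then for every `a ≤ z ≤ b` the number of `k ∈ [a,b]` with `g k = 1` and
`τ k = z` equals `max (-g z) 0`. -/
theorem pathwise_allocation (g : ℤ → ℤ) (hg : ∀ k, g k ≤ 1) (b : ℤ) (hb : g b < 0)
    (a : ℤ) (ha : IsGreatest {k : ℤ | k < b ∧ 0 ≤ ∑ n ∈ Finset.Icc k b, g n} a)
    (τ : ℤ → ℤ)
    (hτ : ∀ k, a ≤ k → k ≤ b →
      IsLeast {n : ℤ | k ≤ n ∧ ∑ j ∈ Finset.Icc k n, g j ≤ 0} (τ k)) :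
    (∀ k, a ≤ k → k ≤ b →
      ∃ n, k ≤ n ∧ n ≤ b ∧ ∑ j ∈ Finset.Icc k n, g j ≤ 0) ∧
    (∀ z, a ≤ z → z ≤ b →
      (((Finset.Icc a b).filter (fun k => g k = 1 ∧ τ k = z)).card : ℤ)
        = max (-g z) 0) := by
  refine ⟨fun k hak hkb => ⟨b, hkb, le_rfl, sum_Icc_nonpos_of_isGreatest hg hb ha hak hkb⟩,
    fun z haz hzb => ?_⟩
  set W : ℤ → ℤ := fun n => ∑ j ∈ Icc a n, g j
  have hsum : ∀ k n, a ≤ k → k ≤ n + 1 → ∑ j ∈ Icc k n, g j = W n - W (k - 1) :=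
    fun k n hak hkn => eq_sub_of_add_eq' (sum_Icc_consecutive g hak hkn)
  have hstep : ∀ n, a ≤ n → W n = W (n - 1) + g n := fun n han => by
    have := hsum n n han (by omega)
    rw [Icc_self, sum_singleton] at this
    omega
  have hτW : ∀ k, a ≤ k → k ≤ b → IsLeast {n | k ≤ n ∧ W n ≤ W (k - 1)} (τ k) := by
    intro k hak hkb
    have hset : {n | k ≤ n ∧ ∑ j ∈ Icc k n, g j ≤ 0} = {n | k ≤ n ∧ W n ≤ W (k - 1)} :=
      Set.ext fun n => and_congr_right fun hkn => by rw [hsum k n hak (by omega), sub_nonpos]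
    exact hset ▸ hτ k hak hkb
  have hupStep : {k ∈ Icc a b | g k = 1 ∧ τ k = z} =
      {k ∈ Icc a b | W k = W (k - 1) + 1 ∧ τ k = z} :=
    filter_congr fun k hk => by rw [hstep k (mem_Icc.1 hk).1]; omega
  have hstart : W (a - 1) ≤ W z := by
    simpa [W] using sum_Icc_nonneg_of_isGreatest hb ha haz hzb
  rw [hupStep, card_filter_upStep_firstPassage (fun n han => by linarith [hstep n han, hg n])
    haz hzb hstart τ hτW, Int.toNat_eq_max, hstep z haz, sub_add_cancel_left]
end

section
/- Let n ≥ 1 and let ξ₁, …, ξₙ be integers with ξᵢ ≤ 1 for all i. Set S₀ = 0 and Sₖ = ξ₁ + ⋯ + ξₖ. Then the number of indices j ∈ {1, …, n} such that S_{j−1} < Sₖ for all k ∈ {j, …, n} equals Sₙ − min{S₀, S₁, …, Sₙ}. -/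
/-!
Read the count backwards in time. Let `M t` be the minimum of `S` over `[t, n]` and
`E t` the set of `j ∈ (t, n]` after which the walk stays strictly above `S (j - 1)`.
Passing from `t + 1` to `t`, the index `t + 1` joins `E` exactly when `S t < M (t + 1)`.
In that case `M (t + 1) ≤ S (t + 1) ≤ S t + 1` forces `M (t + 1) = S t + 1`, so the new
minimum `M t = S t` is one less; otherwise `M t = M (t + 1)`. Hence `|E t| = S n - M t`
for all `t ≤ n`, and `t = 0` is the claim.
-/

open Finset

theorem Finset.inf'_Icc_eq_inf_inf'_Icc_add_one {α : Type*} [SemilatticeInf α] (f : ℕ → α)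
    {t n : ℕ} (ht : t < n) (h : (Icc t n).Nonempty) :
    (Icc t n).inf' h f = f t ⊓ (Icc (t + 1) n).inf' (nonempty_Icc.mpr ht) f := by
  rw [inf'_congr h (insert_Icc_add_one_left_eq_Icc ht.le).symm fun _ _ => rfl, inf'_insert]

namespace SkipFree

variable (S : ℕ → ℤ) (n : ℕ)

def escapeTimes (t : ℕ) : Finset ℕ :=
  (Icc (t + 1) n).filter fun j => ∀ k ∈ Icc j n, S (j - 1) < S k

theorem escapeTimes_self : escapeTimes S n n = ∅ := by
  simp [escapeTimes]

theorem escapeTimes_of_lt {t : ℕ} (ht : t < n) :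
    escapeTimes S n t =
      if S t < (Icc (t + 1) n).inf' (nonempty_Icc.mpr ht) S
      then insert (t + 1) (escapeTimes S n (t + 1)) else escapeTimes S n (t + 1) := by
  conv_lhs => rw [escapeTimes, ← insert_Icc_add_one_left_eq_Icc (show t + 1 ≤ n from ht)]
  simp only [filter_insert, lt_inf'_iff, Nat.add_sub_cancel]
  rfl

theorem card_escapeTimes (hstep : ∀ i < n, S (i + 1) ≤ S i + 1) {t : ℕ} (ht : t ≤ n)
    (h : (Icc t n).Nonempty) :
    ((escapeTimes S n t).card : ℤ) = S n - (Icc t n).inf' h S := by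
  induction ht using Nat.decreasingInduction with
  | self => simp [escapeTimes_self]
  | of_succ t ht ih =>
    set M := (Icc (t + 1) n).inf' (nonempty_Icc.mpr ht) S
    have hM : ((escapeTimes S n (t + 1)).card : ℤ) = S n - M := ih _
    rw [escapeTimes_of_lt S n ht, inf'_Icc_eq_inf_inf'_Icc_add_one S ht]
    split_ifs with hlt
    · have hMle : M ≤ S (t + 1) := inf'_le S (by simp [ht])
      have hM_eq : M = S t + 1 := le_antisymm (hMle.trans (hstep t ht)) hlt
      rw [card_insert_of_notMem (by simp [escapeTimes]), min_eq_left hlt.le]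
      push_cast
      omega
    · rwa [min_eq_right (not_lt.mp hlt)]

end SkipFree

/-- **Deterministic path identity for skip-free walks** (core of Lemma 4.1(a)).
Let `n ≥ 1` and `ξ 1, …, ξ n` be integers with `ξ i ≤ 1`.  With
`S k = ξ 1 + ⋯ + ξ k` (so `S 0 = 0`), the number of indices `j ∈ {1, …, n}` such that
`S (j-1) < S k` for all `k ∈ {j, …, n}` equals `S n - min {S 0, S 1, …, S n}`. -/
theorem skip_free_path_identity (n : ℕ) (ξ : ℕ → ℤ)
    (hξ : ∀ i, 1 ≤ i → i ≤ n → ξ i ≤ 1)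
    (S : ℕ → ℤ) (hS : ∀ k, S k = ∑ i ∈ Finset.Icc 1 k, ξ i) :
    (((Finset.Icc 1 n).filter
        (fun j => ∀ k ∈ Finset.Icc j n, S (j - 1) < S k)).card : ℤ)
      = S n - (Finset.Icc 0 n).inf' ⟨0, by simp⟩ S := by
  have hstep : ∀ i < n, S (i + 1) ≤ S i + 1 := fun i hi => by
    rw [hS, hS, sum_Icc_succ_top (by omega)]
    linarith [hξ (i + 1) (by omega) hi]
  exact SkipFree.card_escapeTimes S n hstep (Nat.zero_le n) _
end

section
/- Let ξ, ξ₁, ξ₂, … be independent identically distributed integer-valued random variables with P(ξ > 1) = 0. Let Sₙ = ξ₁ + ⋯ + ξₙ and N = min{n ≥ 1 : Sₙ ≤ 0} (with N = ∞ if no such n exists). Then for every n ≥ 1, E[min(N, n)] ≥ E[max(Sₙ, 0)]. -/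
open MeasureTheory ProbabilityTheory Finset
open scoped ENNReal

/-!
Write `S m = ξ 0 + ⋯ + ξ (m - 1)`. Since `min (N, n) = #{k < n | S 1, …, S k > 0}`, the right-hand
side is `∑ k < n, P(S 1, …, S k > 0)`. Reversing the order of the first `k` steps does not change
their joint law and turns `S 1, …, S k > 0` into "`k` is a strict record time", i.e.
`S i < S k` for all `i < k`; so the right-hand side is the expected number of strict record times
below `n`. When the walk moves up by at most one per step, its running maximum grows only at
strict record times and then by exactly one, so this number exceeds `S k` for every `k < n` and
is therefore at least `max (S n, 0)`.
-/

lemma MeasureTheory.lintegral_card_filter {Ω ι : Type*} [MeasurableSpace Ω] (μ : Measure Ω)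
    (s : Finset ι) {p : ι → Ω → Prop} [∀ i ω, Decidable (p i ω)]
    (hp : ∀ i, MeasurableSet {ω | p i ω}) :
    ∫⁻ ω, (#{i ∈ s | p i ω} : ℝ≥0∞) ∂μ = ∑ i ∈ s, μ {ω | p i ω} := by
  simp_rw [card_filter, Nat.cast_sum, Nat.cast_ite, Nat.cast_one, Nat.cast_zero]
  rw [lintegral_finsetSum _ fun i _ => measurable_const.ite (hp i) measurable_const]
  refine sum_congr rfl fun i _ => ?_
  simp [← lintegral_indicator_one (hp i), Set.indicator_apply]

lemma ProbabilityTheory.iIndepFun.identDistrib_precomp {Ω ι β : Type*} [MeasurableSpace Ω]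
    [MeasurableSpace β] {μ : Measure Ω} {X : ι → Ω → β} (hX : ∀ i, Measurable (X i))
    (h : iIndepFun X μ) {g : ι → ι} (hg : g.Injective)
    (hgX : ∀ i, IdentDistrib (X (g i)) (X i) μ μ) :
    IdentDistrib (fun ω i => X (g i) ω) (fun ω i => X i ω) μ μ where
  aemeasurable_fst := (measurable_pi_lambda _ fun i => hX (g i)).aemeasurable
  aemeasurable_snd := (measurable_pi_lambda _ hX).aemeasurable
  map_eq := by
    rw [(h.precomp hg).map_fun_eq_infinitePi_map (fun i => hX (g i)),
      h.map_fun_eq_infinitePi_map hX]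
    simp only [(hgX _).map_eq]

namespace RandomWalk

def StaysPositive (x : ℕ → ℤ) (k : ℕ) : Prop :=
  ∀ m ∈ Ioc 0 k, 0 < ∑ i ∈ range m, x i

def IsStrictRecord (x : ℕ → ℤ) (k : ℕ) : Prop :=
  ∀ i < k, ∑ j ∈ range i, x j < ∑ j ∈ range k, x j

instance (x : ℕ → ℤ) (k : ℕ) : Decidable (StaysPositive x k) := by
  unfold StaysPositive; infer_instance

instance (x : ℕ → ℤ) (k : ℕ) : Decidable (IsStrictRecord x k) := by
  unfold IsStrictRecord; infer_instance

def reflectBelow (k i : ℕ) : ℕ := if i < k then k - 1 - i else i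

lemma reflectBelow_involutive (k : ℕ) : Function.Involutive (reflectBelow k) := by
  intro i
  unfold reflectBelow
  split_ifs <;> omega

lemma sum_range_reflectBelow (x : ℕ → ℤ) {m k : ℕ} (hmk : m ≤ k) :
    ∑ i ∈ range m, x (reflectBelow k i) = ∑ i ∈ range k, x i - ∑ i ∈ range (k - m), x i := by
  induction m with
  | zero => simp
  | succ m ih =>
    have hk : k - m = k - (m + 1) + 1 := by omega
    rw [sum_range_succ, ih (by omega), hk, sum_range_succ, reflectBelow, if_pos (by omega),
      show k - 1 - m = k - (m + 1) by omega]
    ring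

lemma isStrictRecord_iff_staysPositive_comp_reflectBelow (x : ℕ → ℤ) (k : ℕ) :
    IsStrictRecord x k ↔ StaysPositive (x ∘ reflectBelow k) k := by
  constructor
  · intro h m hm
    rw [mem_Ioc] at hm
    rw [Function.comp_def, sum_range_reflectBelow x hm.2, sub_pos]
    exact h _ (by omega)
  · intro h i hi
    have := h (k - i) (mem_Ioc.2 ⟨by omega, by omega⟩)
    rwa [Function.comp_def, sum_range_reflectBelow x (by omega), Nat.sub_sub_self hi.le,
      sub_pos] at this

lemma sInf_firstPassage_eq_card_staysPositive (x : ℕ → ℤ) (n : ℕ) :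
    sInf ({m | 1 ≤ m ∧ ∑ i ∈ range m, x i ≤ 0} ∪ {n}) = #{k ∈ range n | StaysPositive x k} := by
  set T : Set ℕ := {m | 1 ≤ m ∧ ∑ i ∈ range m, x i ≤ 0} ∪ {n}
  have hnT : n ∈ T := Or.inr rfl
  suffices {k ∈ range n | StaysPositive x k} = range (sInf T) by rw [this, card_range]
  ext k
  simp only [mem_filter, mem_range]
  constructor
  · rintro ⟨hkn, hpos⟩
    by_contra! hk
    rcases Nat.sInf_mem ⟨n, hnT⟩ with ⟨h1, h2⟩ | h3
    · exact (hpos _ (mem_Ioc.2 ⟨h1, hk⟩)).not_ge h2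
    · rw [h3] at hk; omega
  · intro hk
    refine ⟨hk.trans_le (Nat.sInf_le hnT), fun m hm => ?_⟩
    rw [mem_Ioc] at hm
    have : m ∉ T := Nat.notMem_of_lt_sInf (hm.2.trans_lt hk)
    simp only [T, Set.mem_union, Set.mem_ofPred_eq, not_or, not_and, not_le] at this
    exact this.1 hm.1

lemma sum_range_lt_card_isStrictRecord {x : ℕ → ℤ} (hx : ∀ i, x i ≤ 1) (m : ℕ) :
    ∀ k ≤ m, ∑ i ∈ range k, x i < #{j ∈ range (m + 1) | IsStrictRecord x j} := by
  induction m with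
  | zero =>
    intro k hk
    obtain rfl : k = 0 := by omega
    have : IsStrictRecord x 0 := fun i hi => absurd hi (Nat.not_lt_zero i)
    simp [filter_singleton, this]
  | succ m ih =>
    intro k hk
    have hR : #{j ∈ range (m + 1) | IsStrictRecord x j}
        ≤ #{j ∈ range (m + 2) | IsStrictRecord x j} :=
      card_le_card (filter_subset_filter _ (range_subset_range.2 (by omega)))
    rcases hk.lt_or_eq with hk | rfl
    · exact (ih k (by omega)).trans_le (by exact_mod_cast hR)
    rw [sum_range_succ, range_add_one (n := m + 1), filter_insert]
    by_cases hrec : IsStrictRecord x (m + 1)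
    · rw [if_pos hrec, card_insert_of_notMem (by simp)]
      push_cast
      linarith [ih m le_rfl, hx m]
    · rw [if_neg hrec]
      obtain ⟨i, hi, hle⟩ : ∃ i < m + 1, ∑ j ∈ range (m + 1), x j ≤ ∑ j ∈ range i, x j := by
        simpa [IsStrictRecord] using hrec
      rw [← sum_range_succ]
      exact hle.trans_lt (ih i (by omega))

lemma sum_range_le_card_isStrictRecord {x : ℕ → ℤ} (hx : ∀ i, x i ≤ 1) (n : ℕ) :
    ∑ i ∈ range n, x i ≤ #{k ∈ range n | IsStrictRecord x k} := by
  cases n with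
  | zero => simp
  | succ m =>
    rw [sum_range_succ]
    have := sum_range_lt_card_isStrictRecord hx m m le_rfl
    linarith [hx m]

lemma max_sum_range_zero_le_card_isStrictRecord {x : ℕ → ℤ} (hx : ∀ i, x i ≤ 1) (n : ℕ) :
    max (∑ i ∈ range n, x i) 0 ≤ #{k ∈ range n | IsStrictRecord x k} :=
  max_le (sum_range_le_card_isStrictRecord hx n) (Nat.cast_nonneg _)

lemma measurableSet_staysPositive (k : ℕ) : MeasurableSet {x : ℕ → ℤ | StaysPositive x k} := by
  unfold StaysPositive; measurability

lemma measurableSet_isStrictRecord (k : ℕ) : MeasurableSet {x : ℕ → ℤ | IsStrictRecord x k} := by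
  unfold IsStrictRecord; measurability

lemma measure_isStrictRecord_eq_measure_staysPositive {Ω : Type*} [MeasurableSpace Ω]
    {μ : Measure Ω} {ξ : ℕ → Ω → ℤ} (hmeas : ∀ i, Measurable (ξ i)) (hindep : iIndepFun ξ μ)
    (hident : ∀ i, IdentDistrib (ξ i) (ξ 0) μ μ) (k : ℕ) :
    μ {ω | IsStrictRecord (fun i => ξ i ω) k} = μ {ω | StaysPositive (fun i => ξ i ω) k} := by
  have hrev := hindep.identDistrib_precomp hmeas (reflectBelow_involutive k).injective
    fun i => (hident _).trans (hident i).symm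
  simp_rw [isStrictRecord_iff_staysPositive_comp_reflectBelow]
  exact hrev.measure_mem_eq (measurableSet_staysPositive k)

end RandomWalk

open RandomWalk

theorem min_firstPassage_ge_positive_part_general
    {Ω : Type*} [MeasurableSpace Ω] (μ : Measure Ω)
    (ξ : ℕ → Ω → ℤ) (hmeas : ∀ i, Measurable (ξ i))
    (hindep : iIndepFun ξ μ)
    (hident : ∀ i, IdentDistrib (ξ i) (ξ 0) μ μ)
    (hskip : μ {ω | 1 < ξ 0 ω} = 0)
    (n : ℕ) :
    ∫⁻ ω, ENNReal.ofReal ((max (∑ i ∈ Finset.range n, ξ i ω) 0 : ℤ)) ∂μ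
      ≤ ∫⁻ ω,
          ((sInf ({m : ℕ | 1 ≤ m ∧ ∑ i ∈ Finset.range m, ξ i ω ≤ 0} ∪ {n}) : ℕ)
            : ENNReal) ∂μ := by
  have hskip_all : ∀ᵐ ω ∂μ, ∀ i, ξ i ω ≤ 1 := by
    refine ae_all_iff.2 fun i => (hident i).symm.ae_snd measurableSet_Iic ?_
    exact (measure_eq_zero_iff_ae_notMem.1 hskip).mono fun ω h => not_lt.1 h
  have hmeas_path : Measurable fun ω i => ξ i ω := measurable_pi_lambda _ hmeas
  calc ∫⁻ ω, ENNReal.ofReal ((max (∑ i ∈ range n, ξ i ω) 0 : ℤ)) ∂μ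
      ≤ ∫⁻ ω, (#{k ∈ range n | IsStrictRecord (fun i => ξ i ω) k} : ℝ≥0∞) ∂μ := by
        refine lintegral_mono_ae (hskip_all.mono fun ω hω => ?_)
        rw [← ENNReal.ofReal_natCast]
        exact ENNReal.ofReal_le_ofReal
          (by exact_mod_cast max_sum_range_zero_le_card_isStrictRecord hω n)
    _ = ∑ k ∈ range n, μ {ω | IsStrictRecord (fun i => ξ i ω) k} :=
        lintegral_card_filter μ _ fun k => hmeas_path (measurableSet_isStrictRecord k)
    _ = ∑ k ∈ range n, μ {ω | StaysPositive (fun i => ξ i ω) k} :=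
        sum_congr rfl fun k _ =>
          measure_isStrictRecord_eq_measure_staysPositive hmeas hindep hident k
    _ = ∫⁻ ω, (#{k ∈ range n | StaysPositive (fun i => ξ i ω) k} : ℝ≥0∞) ∂μ :=
        (lintegral_card_filter μ _ fun k => hmeas_path (measurableSet_staysPositive k)).symm
    _ = _ := by simp_rw [sInf_firstPassage_eq_card_staysPositive]

/-- **Intermediate inequality in Lemma 4.1(a)**.
Let `ξ 0, ξ 1, …` be i.i.d. integer-valued random variables that are skip-free to the
right, i.e. `P(ξ > 1) = 0`.  Let `S n = ξ 0 + ⋯ + ξ (n-1)` and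
`N = min {n ≥ 1 : S n ≤ 0}` (`N = ∞` if there is no such `n`).  Then for every `n ≥ 1`,
`E[min (N, n)] ≥ E[max (S n, 0)]`, where `min (N ω, n)` is encoded as
`sInf ({m : 1 ≤ m ∧ S m ω ≤ 0} ∪ {n})`. -/
theorem min_firstPassage_ge_positive_part
    {Ω : Type*} [MeasurableSpace Ω] (μ : Measure Ω) [IsProbabilityMeasure μ]
    (ξ : ℕ → Ω → ℤ) (hmeas : ∀ i, Measurable (ξ i))
    (hindep : iIndepFun ξ μ)
    (hident : ∀ i, IdentDistrib (ξ i) (ξ 0) μ μ)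
    (hskip : μ {ω | 1 < ξ 0 ω} = 0)
    (n : ℕ) (hn : 1 ≤ n) :
    ∫⁻ ω, ENNReal.ofReal ((max (∑ i ∈ Finset.range n, ξ i ω) 0 : ℤ)) ∂μ
      ≤ ∫⁻ ω,
          ((sInf ({m : ℕ | 1 ≤ m ∧ ∑ i ∈ Finset.range m, ξ i ω ≤ 0} ∪ {n}) : ℕ)
            : ENNReal) ∂μ :=
  min_firstPassage_ge_positive_part_general μ ξ hmeas hindep hident hskip n
end

section
/- Let T be a random variable taking values in the positive integers (almost surely finite), and let T₁, T₂, … be independent copies of T. Define the renewal function U(n) = ∑_{k≥1} P(T₁ + ⋯ + T_k ≤ n), which is finite for every n. Then for every 0 ≤ α < 1, E[U(T)^α] < ∞. -/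
/-!
Write `S k = T 0 + ⋯ + T k`. The events `{S k ≤ n ≤ T (k + 1)}` are pairwise disjoint, because on
the `k`-th one already `S (k + 1) > n`, and by independence the `k`-th has probability
`P(S k ≤ n) P(T ≥ n)`; summing over `k` gives `P(T ≥ n) U(n) ≤ 1`. Applied to the least `n` with
`U(n) ≥ t`, this is the weak-`L¹` bound `t P(U(T) ≥ t) ≤ 1`, and a dyadic decomposition of the
values of `U(T)` shows that a weak-`L¹` variable has finite moments of every order `α < 1`.
-/

open MeasureTheory ProbabilityTheory
open scoped ENNReal NNReal

section Renewal

variable {Ω : Type*} [MeasurableSpace Ω] (μ : Measure Ω) (T : ℕ → Ω → ℕ)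

noncomputable def renewalFunction (n : ℕ) : ℝ≥0∞ :=
  ∑' k : ℕ, μ {ω | ∑ i ∈ Finset.range (k + 1), T i ω ≤ n}

variable {μ T}

theorem renewalFunction_le [IsProbabilityMeasure μ] (hpos : ∀ i ω, 1 ≤ T i ω) (n : ℕ) :
    renewalFunction μ T n ≤ n := by
  have hvanish : ∀ k ∉ Finset.range n,
      μ {ω | ∑ i ∈ Finset.range (k + 1), T i ω ≤ n} = 0 := by
    intro k hk
    rw [Finset.mem_range, not_lt] at hk
    refine measure_mono_null (fun ω hω => ?_) measure_empty
    have hge : k + 1 ≤ ∑ i ∈ Finset.range (k + 1), T i ω := by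
      simpa [Nat.succ_le_iff] using
        Finset.card_nsmul_le_sum (Finset.range (k + 1)) (T · ω) 1 fun i _ => hpos i ω
    exact absurd (hge.trans hω) (by omega)
  rw [renewalFunction, tsum_eq_sum hvanish]
  calc ∑ k ∈ Finset.range n, μ {ω | ∑ i ∈ Finset.range (k + 1), T i ω ≤ n}
      ≤ ∑ _k ∈ Finset.range n, (1 : ℝ≥0∞) := Finset.sum_le_sum fun _ _ => prob_le_one
    _ = n := by simp

theorem measure_le_mul_renewalFunction_le_one [IsProbabilityMeasure μ]
    (hmeas : ∀ i, Measurable (T i)) (hindep : iIndepFun T μ)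
    (hident : ∀ i, IdentDistrib (T i) (T 0) μ μ) (hpos : ∀ ω, 1 ≤ T 0 ω) (n : ℕ) :
    μ {ω | n ≤ T 0 ω} * renewalFunction μ T n ≤ 1 := by
  set B : ℕ → Set Ω := fun k =>
    {ω | ∑ i ∈ Finset.range (k + 1), T i ω ≤ n} ∩ {ω | n ≤ T (k + 1) ω}
  have hB : ∀ k, μ (B k) =
      μ {ω | n ≤ T 0 ω} * μ {ω | ∑ i ∈ Finset.range (k + 1), T i ω ≤ n} := by
    intro k
    have hind := hindep.indepFun_sum_range_succ hmeas (k + 1)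
    rw [Finset.sum_fn] at hind
    refine (hind.measure_inter_preimage_eq_mul _ _ measurableSet_Iic measurableSet_Ici).trans ?_
    rw [(hident (k + 1)).measure_mem_eq measurableSet_Ici, mul_comm]
    rfl
  have hdisj : Pairwise (Function.onFun Disjoint B) := by
    refine (pairwise_disjoint_on B).2 fun j k hjk => Set.disjoint_left.2 ?_
    rintro ω ⟨hSj, hTj⟩ ⟨hSk, -⟩
    have hT0 : T 0 ω ≤ ∑ i ∈ Finset.range (j + 1), T i ω :=
      Finset.single_le_sum (f := (T · ω)) (fun _ _ => Nat.zero_le _)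
        (Finset.mem_range.2 j.succ_pos)
    have hSjk : ∑ i ∈ Finset.range (j + 1), T i ω + T (j + 1) ω
        ≤ ∑ i ∈ Finset.range (k + 1), T i ω := by
      rw [← Finset.sum_range_succ]
      exact Finset.sum_le_sum_of_subset (Finset.range_subset_range.2 (by omega))
    simp only [Set.mem_ofPred_eq] at hSj hTj hSk
    have := hpos ω
    omega
  have hBmeas : ∀ k, MeasurableSet (B k) := fun k =>
    (measurableSet_le (Finset.measurable_sum _ fun i _ => hmeas i) measurable_const).inter
      (measurableSet_le measurable_const (hmeas (k + 1)))
  calc μ {ω | n ≤ T 0 ω} * renewalFunction μ T n = ∑' k, μ (B k) := by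
        rw [renewalFunction, ← ENNReal.tsum_mul_left]
        exact tsum_congr fun k => (hB k).symm
    _ ≤ μ (⋃ k, B k) := tsum_meas_le_meas_iUnion_of_disjoint μ hBmeas hdisj
    _ ≤ 1 := prob_le_one

end Renewal

theorem mul_meas_ge_comp_le {Ω : Type*} [MeasurableSpace Ω] {μ : Measure Ω}
    {f : ℕ → ℝ≥0∞} {X : Ω → ℕ} {C : ℝ≥0∞}
    (h : ∀ n, μ {ω | n ≤ X ω} * f n ≤ C) (t : ℝ≥0∞) : t * μ {ω | t ≤ f (X ω)} ≤ C := by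
  rcases Set.eq_empty_or_nonempty {n | t ≤ f n} with hempty | hne
  · have : {ω | t ≤ f (X ω)} = ∅ :=
      Set.eq_empty_of_forall_notMem fun ω hω => Set.eq_empty_iff_forall_notMem.1 hempty (X ω) hω
    simp [this]
  set m := sInf {n | t ≤ f n}
  have hsub : {ω | t ≤ f (X ω)} ⊆ {ω | m ≤ X ω} := fun _ hω => Nat.sInf_le hω
  calc t * μ {ω | t ≤ f (X ω)} ≤ f m * μ {ω | m ≤ X ω} :=
        mul_le_mul' (Nat.sInf_mem hne) (measure_mono hsub)
    _ ≤ C := mul_comm (f m) _ ▸ h m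

theorem ENNReal.rpow_le_one_add_mul_tsum_two_pow {α : ℝ} (hα : 0 ≤ α) (x : ℝ≥0∞) :
    x ^ α ≤ 1 + 2 ^ α * ∑' j : ℕ, if 2 ^ j ≤ x then ((2 : ℝ≥0∞) ^ α) ^ j else 0 := by
  rcases lt_or_ge x 1 with hx | hx
  · exact (ENNReal.rpow_le_one hx.le hα).trans le_self_add
  rcases eq_or_ne x ⊤ with rfl | hxt
  · have h2α : (2 : ℝ≥0∞) ^ α ≠ 0 := (ENNReal.rpow_pos (by norm_num) ENNReal.ofNat_ne_top).ne'
    have hsum : ∑' j : ℕ, (if (2 : ℝ≥0∞) ^ j ≤ ⊤ then ((2 : ℝ≥0∞) ^ α) ^ j else 0) = ⊤ := by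
      have h1 : (1 : ℝ≥0∞) ≤ 2 ^ α := by
        simpa using ENNReal.rpow_le_rpow (by norm_num : (1 : ℝ≥0∞) ≤ 2) hα
      refine top_unique ((ENNReal.tsum_const_eq_top_of_ne_zero (α := ℕ) one_ne_zero).ge.trans ?_)
      exact ENNReal.tsum_le_tsum fun j => by simpa using one_le_pow₀ h1
    rw [hsum, ENNReal.mul_top h2α, _root_.add_top]
    exact le_top
  lift x to ℝ≥0 using hxt
  obtain ⟨J, hJ, hJ1⟩ :=
    exists_nat_pow_near (x := x) (y := 2) (by exact_mod_cast hx) (by norm_num)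
  calc (x : ℝ≥0∞) ^ α ≤ ((2 : ℝ≥0∞) ^ (J + 1)) ^ α :=
        ENNReal.rpow_le_rpow (by exact_mod_cast hJ1.le) hα
    _ = 2 ^ α * ((2 : ℝ≥0∞) ^ α) ^ J := by
        rw [pow_succ', ENNReal.mul_rpow_of_nonneg _ _ hα, ← ENNReal.rpow_natCast,
          ← ENNReal.rpow_mul, mul_comm (J : ℝ), ENNReal.rpow_mul_natCast, mul_comm]
    _ ≤ 2 ^ α * ∑' j : ℕ, if 2 ^ j ≤ (x : ℝ≥0∞) then ((2 : ℝ≥0∞) ^ α) ^ j else 0 := by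
        gcongr
        refine le_of_eq_of_le ?_ (ENNReal.le_tsum J)
        rw [if_pos (by exact_mod_cast hJ)]
    _ ≤ _ := le_add_self

theorem lintegral_rpow_lt_top_of_mul_meas_le {Ω : Type*} [MeasurableSpace Ω] {μ : Measure Ω}
    [IsFiniteMeasure μ] {X : Ω → ℝ≥0∞} (hX : Measurable X) {C : ℝ≥0∞} (hC : C ≠ ⊤)
    (hXC : ∀ t, t * μ {ω | t ≤ X ω} ≤ C) {α : ℝ} (hα0 : 0 ≤ α) (hα1 : α < 1) :
    ∫⁻ ω, X ω ^ α ∂μ < ⊤ := by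
  set c : ℝ≥0∞ := 2 ^ α
  have hc2 : c / 2 < 1 := by
    rw [ENNReal.div_lt_iff (by simp) (by simp), one_mul]
    simpa using ENNReal.rpow_lt_rpow_of_exponent_lt ENNReal.one_lt_two ENNReal.ofNat_ne_top hα1
  have hlevel : ∀ j : ℕ, c ^ j * μ {ω | 2 ^ j ≤ X ω} ≤ C * (c / 2) ^ j := by
    intro j
    have h : μ {ω | 2 ^ j ≤ X ω} ≤ C / 2 ^ j :=
      ENNReal.le_div_iff_mul_le (by simp) (by simp) |>.2 (by rw [mul_comm]; exact hXC _)
    calc c ^ j * μ {ω | 2 ^ j ≤ X ω} ≤ c ^ j * (C / 2 ^ j) := by gcongr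
      _ = C * (c / 2) ^ j := by
        rw [div_eq_mul_inv, div_eq_mul_inv, mul_pow, ENNReal.inv_pow]
        ring
  calc ∫⁻ ω, X ω ^ α ∂μ
      ≤ ∫⁻ ω, 1 + c * ∑' j : ℕ, {ω | 2 ^ j ≤ X ω}.indicator (fun _ => c ^ j) ω ∂μ :=
        lintegral_mono fun ω => by
          simpa [Set.indicator_apply] using ENNReal.rpow_le_one_add_mul_tsum_two_pow hα0 (X ω)
    _ = μ Set.univ + c * ∑' j : ℕ, c ^ j * μ {ω | 2 ^ j ≤ X ω} := by
        have hind : ∀ j : ℕ, MeasurableSet {ω | (2 : ℝ≥0∞) ^ j ≤ X ω} :=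
          fun j => measurableSet_le measurable_const hX
        rw [lintegral_add_left measurable_const, lintegral_const, one_mul,
          lintegral_const_mul _ (Measurable.tsum fun j => measurable_const.indicator (hind j)),
          lintegral_tsum fun j => measurable_const.indicator (hind j) |>.aemeasurable]
        simp only [lintegral_indicator_const (hind _)]
    _ ≤ μ Set.univ + c * ∑' j : ℕ, C * (c / 2) ^ j := by
        gcongr _ + _ * ?_
        exact ENNReal.tsum_le_tsum hlevel
    _ = μ Set.univ + c * (C * (1 - c / 2)⁻¹) := by
        rw [ENNReal.tsum_mul_left, ENNReal.tsum_geometric]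
    _ < ⊤ := by
        have hgeom : (1 - c / 2)⁻¹ ≠ ⊤ := ENNReal.inv_ne_top.2 (tsub_pos_of_lt hc2).ne'
        have hc : c ≠ ⊤ := ENNReal.rpow_ne_top_of_nonneg hα0 ENNReal.ofNat_ne_top
        finiteness

/-- **Lemma 4.5 in renewal form**.
Let `T 0, T 1, …` be i.i.d. random variables taking values in the positive integers,
and let `U n = ∑_{k ≥ 1} P(T 0 + ⋯ + T (k-1) ≤ n)` be the renewal function.  Then for
every `0 ≤ α < 1`, `E[U(T 0)^α] < ∞`. -/
theorem renewal_function_moment_finite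
    {Ω : Type*} [MeasurableSpace Ω] (μ : Measure Ω) [IsProbabilityMeasure μ]
    (T : ℕ → Ω → ℕ) (hmeas : ∀ i, Measurable (T i))
    (hindep : iIndepFun T μ)
    (hident : ∀ i, IdentDistrib (T i) (T 0) μ μ)
    (hpos : ∀ i ω, 1 ≤ T i ω)
    (U : ℕ → ℝ≥0∞)
    (hU : ∀ n, U n = ∑' k : ℕ, μ {ω | ∑ i ∈ Finset.range (k + 1), T i ω ≤ n}) :
    (∀ n, U n < ⊤) ∧
    ∀ α : ℝ, 0 ≤ α → α < 1 → ∫⁻ ω, (U (T 0 ω)) ^ α ∂μ < ⊤ := by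
  obtain rfl : U = renewalFunction μ T := funext hU
  refine ⟨fun n => (renewalFunction_le hpos n).trans_lt (ENNReal.natCast_lt_top n),
    fun α hα0 hα1 => ?_⟩
  have htail : ∀ t, t * μ {ω | t ≤ renewalFunction μ T (T 0 ω)} ≤ 1 :=
    mul_meas_ge_comp_le
      (measure_le_mul_renewalFunction_le_one hmeas hindep hident (hpos 0))
  exact lintegral_rpow_lt_top_of_mul_meas_le
    ((measurable_of_countable (renewalFunction μ T)).comp (hmeas 0))
    ENNReal.one_ne_top htail hα0 hα1
end

section
/- Let (sₙ)_{n≥0} be a nondecreasing sequence of reals with 0 ≤ sₙ < 1 for all n, and let 0 ≤ α < 1. Then ∑_{n=1}^{∞} (1 − s_{n−1})^{−α} (sₙ − s_{n−1}) ≤ 1/(1 − α). -/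
/-!
With `F(x) = (1 - x)^(1-α) / (1 - α)`, concavity of `t ↦ t^(1-α)` bounds each term
`(1 - sₙ)^(-α) (sₙ₊₁ - sₙ)` by the decrement `F(sₙ) - F(sₙ₊₁)`. The partial sums therefore
telescope to at most `F(s₀) - F(s_N) ≤ F(0) = 1/(1 - α)`.
-/

open Real Finset

lemma Real.mul_rpow_sub_one_mul_sub_le_rpow_sub_rpow {p u v : ℝ} (hp₀ : 0 ≤ p) (hp₁ : p ≤ 1)
    (hu : 0 < u) (hv : 0 ≤ v) : p * u ^ (p - 1) * (u - v) ≤ u ^ p - v ^ p := by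
  -- weighted AM-GM: `v^p u^(1-p) ≤ p v + (1-p) u`, then divide by `u^(1-p)`
  have amgm := geom_mean_le_arith_mean2_weighted hp₀ (sub_nonneg.2 hp₁) hv hu.le
    (add_sub_cancel p 1)
  have hu' : u ^ (1 - p) * u ^ (p - 1) = 1 := by
    rw [← rpow_add hu, sub_add_sub_cancel, sub_self, rpow_zero]
  have hup : u ^ p = u * u ^ (p - 1) := by
    rw [rpow_sub_one hu.ne', mul_div_cancel₀ _ hu.ne']
  have := mul_le_mul_of_nonneg_right amgm (rpow_nonneg hu.le (p - 1))
  rw [mul_assoc, hu', mul_one] at this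
  rw [hup]
  linarith

lemma tsum_le_of_le_sub_succ {a F : ℕ → ℝ} (ha : ∀ n, 0 ≤ a n) (haF : ∀ n, a n ≤ F n - F (n + 1))
    (hF : ∀ n, 0 ≤ F n) : ∑' n, a n ≤ F 0 :=
  Real.tsum_le_of_sum_range_le ha fun N =>
    calc ∑ n ∈ range N, a n ≤ ∑ n ∈ range N, (F n - F (n + 1)) := sum_le_sum fun n _ => haF n
      _ = F 0 - F N := sum_range_sub' F N
      _ ≤ F 0 := sub_le_self _ (hF N)

/-- **Elementary series bound** (analytic step in the proof of Lemma 4.5).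
If `(s n)` is nondecreasing with `0 ≤ s n < 1` and `0 ≤ α < 1`, then
`∑_{n=1}^∞ (1 - s (n-1))^{-α} (s n - s (n-1)) ≤ 1 / (1 - α)`. -/
theorem series_bound (s : ℕ → ℝ) (hmono : Monotone s)
    (h0 : ∀ n, 0 ≤ s n) (h1 : ∀ n, s n < 1)
    (α : ℝ) (hα0 : 0 ≤ α) (hα1 : α < 1) :
    ∑' n : ℕ, (1 - s n) ^ (-α) * (s (n + 1) - s n) ≤ 1 / (1 - α) := by
  have hα : 0 < 1 - α := sub_pos.2 hα1
  have hs : ∀ n, 0 < 1 - s n := fun n => sub_pos.2 (h1 n)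
  have hstep : ∀ n, 0 ≤ s (n + 1) - s n := fun n => sub_nonneg.2 (hmono n.le_succ)
  let F : ℕ → ℝ := fun n => (1 - s n) ^ (1 - α) / (1 - α)
  calc ∑' n, (1 - s n) ^ (-α) * (s (n + 1) - s n) ≤ F 0 := by
        refine tsum_le_of_le_sub_succ (fun n => mul_nonneg (rpow_nonneg (hs n).le _) (hstep n))
          (fun n => ?_) (fun n => div_nonneg (rpow_nonneg (hs n).le _) hα.le)
        have tangent := mul_rpow_sub_one_mul_sub_le_rpow_sub_rpow hα.le (sub_le_self 1 hα0)
          (hs n) (hs (n + 1)).le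
        rw [sub_sub_cancel_left, sub_sub_sub_cancel_left] at tangent
        rw [← sub_div, le_div_iff₀ hα]
        linarith
    _ ≤ 1 / (1 - α) :=
        div_le_div_of_nonneg_right (rpow_le_one (hs 0).le (sub_le_self 1 (h0 0)) hα.le) hα.le
end

section
/- Let p ∈ (0,1) with (1−p)/p not an integer. Let μ be the product probability measure on {0,1}^ℤ under which the coordinates are i.i.d. Bernoulli(p) (value 1 = heads with probability p), and let μ₀ be μ conditioned on the event {ω : ω(0) = 0}. Then there exists no measurable map T : {0,1}^ℤ → ℤ such that the pushforward of μ₀ under the map ω ↦ (n ↦ ω(T(ω) + n)) equals μ conditioned on the event {ω : ω(0) = 1}. -/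
/-!
Write `F ω = shift (T ω) ω` and `A = {ω | ω 0 = false}`. A configuration `ω ∈ A` with `T ω = n`
is sent to `x = shift n ω`, i.e. `ω = shift (-n) x`; so `x` receives `N x` configurations, where
`N x` counts the `n` with `shift (-n) x ∈ A` and `T (shift (-n) x) = n`. Shift invariance of the
Bernoulli product measure `μ` gives the mass transport identity
`μ (A ∩ F⁻¹' B) = ∫⁻ x in B, N x ∂μ`. If `F` carries `μ[|A]` to `μ[|{ω 0 = true}]`, the left
side is `(1 - p) / p * μ ({ω 0 = true} ∩ B)`, so `N = (1 - p) / p` almost everywhere on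
`{ω 0 = true}`, a set of positive measure. As `N` takes values in `ℕ ∪ {∞}`, `(1 - p) / p` is a
natural number.
-/

open MeasureTheory ProbabilityTheory Set Function
open scoped ENNReal

section PointCylinders

variable {ι β : Type*}

def pointCylinders : Set (Set (ι → β)) :=
  {S | ∃ (s : Finset ι) (f : ι → β), S = {ω | ∀ i ∈ s, ω i = f i}}

lemma measurableSet_pointCylinder [MeasurableSpace β] [MeasurableSingletonClass β]
    (s : Finset ι) (f : ι → β) : MeasurableSet {ω : ι → β | ∀ i ∈ s, ω i = f i} := by
  simp only [ofPred_forall]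
  exact .biInter s.countable_toSet fun i _ => measurable_pi_apply i (measurableSet_singleton _)

lemma pointCylinder_eq_of_mem {s : Finset ι} {f ω₀ : ι → β}
    (h : ω₀ ∈ {ω : ι → β | ∀ i ∈ s, ω i = f i}) :
    {ω : ι → β | ∀ i ∈ s, ω i = f i} = {ω | ∀ i ∈ s, ω i = ω₀ i} := by
  ext ω
  exact forall₂_congr fun i hi => by rw [h i hi]

lemma isPiSystem_pointCylinders : IsPiSystem (pointCylinders : Set (Set (ι → β))) := by
  classical
  rintro _ ⟨s, f, rfl⟩ _ ⟨t, g, rfl⟩ ⟨ω₀, hs, ht⟩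
  refine ⟨s ∪ t, ω₀, ?_⟩
  rw [pointCylinder_eq_of_mem hs, pointCylinder_eq_of_mem ht]
  ext ω
  simp only [mem_inter_iff, mem_ofPred_eq, Finset.mem_union, or_imp, forall_and]

variable [MeasurableSpace β] [Countable β] [MeasurableSingletonClass β]

lemma generateFrom_pointCylinders :
    MeasurableSpace.generateFrom pointCylinders =
      (MeasurableSpace.pi : MeasurableSpace (ι → β)) := by
  refine le_antisymm (MeasurableSpace.generateFrom_le ?_) (iSup_le fun i => ?_)
  · rintro _ ⟨s, f, rfl⟩
    exact measurableSet_pointCylinder s f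
  · refine (@measurable_to_countable' β (ι → β) _ _ (.generateFrom pointCylinders)
      (fun ω => ω i) fun b => ?_).comap_le
    exact MeasurableSpace.measurableSet_generateFrom ⟨{i}, fun _ => b, by ext; simp⟩

lemma MeasureTheory.Measure.ext_of_pointCylinders {μ ν : Measure (ι → β)} [IsFiniteMeasure μ]
    (h : ∀ (s : Finset ι) (f : ι → β),
      μ {ω | ∀ i ∈ s, ω i = f i} = ν {ω | ∀ i ∈ s, ω i = f i}) : μ = ν := by
  refine ext_of_generate_finite _ generateFrom_pointCylinders.symm isPiSystem_pointCylinders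
    (by rintro _ ⟨s, f, rfl⟩; exact h s f) ?_
  rcases isEmpty_or_nonempty (ι → β) with _ | ⟨⟨f⟩⟩
  · simp [univ_eq_empty_iff.mpr ‹_›]
  · simpa using h ∅ f

end PointCylinders

section Shift

variable {G β : Type*} [AddGroup G]

def shift (n : G) (ω : G → β) : G → β := fun k => ω (n + k)

lemma shift_neg_shift (n : G) (ω : G → β) : shift (-n) (shift n ω) = ω := by
  funext k
  simp [shift]

lemma preimage_shift_pointCylinder [DecidableEq G] (n : G) (s : Finset G) (f : G → β) :
    shift n ⁻¹' {ω | ∀ i ∈ s, ω i = f i} = {ω | ∀ j ∈ s.image (n + ·), ω j = f (-n + j)} := by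
  ext ω
  simp only [mem_preimage, mem_ofPred_eq, Finset.forall_mem_image, neg_add_cancel_left, shift]

noncomputable def transportCount (A : Set (G → β)) (T : (G → β) → G) (x : G → β) : ℝ≥0∞ :=
  {n : G | shift (-n) x ∈ A ∧ T (shift (-n) x) = n}.encard

lemma transportCount_eq_tsum (A : Set (G → β)) (T : (G → β) → G) :
    transportCount A T = fun x => ∑' n, (shift (-n) ⁻¹' (A ∩ {ω | T ω = n})).indicator 1 x := by
  funext x
  rw [transportCount, ← ENNReal.tsum_set_one]
  exact tsum_subtype _ fun _ => 1

variable [MeasurableSpace β]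

lemma measurable_shift (n : G) : Measurable (shift n : (G → β) → G → β) :=
  measurable_pi_lambda _ fun k => measurable_pi_apply (n + k)

lemma measurePreserving_shift [Countable β] [MeasurableSingletonClass β]
    {μ : Measure (G → β)} [IsFiniteMeasure μ] (w : β → ℝ≥0∞)
    (hμ : ∀ (s : Finset G) (f : G → β), μ {ω | ∀ i ∈ s, ω i = f i} = ∏ i ∈ s, w (f i))
    (n : G) : MeasurePreserving (shift n) μ μ := by
  classical
  refine ⟨measurable_shift n, Measure.ext_of_pointCylinders fun s f => ?_⟩
  rw [Measure.map_apply (measurable_shift n) (measurableSet_pointCylinder s f),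
    preimage_shift_pointCylinder, hμ, hμ, Finset.prod_image fun _ _ _ _ => add_left_cancel]
  simp

variable [MeasurableSpace G] [MeasurableSingletonClass G] {A : Set (G → β)} {T : (G → β) → G}

lemma measurableSet_preimage_shift_inter_fiber (hA : MeasurableSet A) (hT : Measurable T) (n : G) :
    MeasurableSet (shift (-n) ⁻¹' (A ∩ {ω | T ω = n})) :=
  measurable_shift (-n) (hA.inter (hT (measurableSet_singleton n)))

variable [Countable G]

lemma Measurable.shift_self (hT : Measurable T) :
    Measurable fun ω => shift (T ω) ω :=
  (measurable_from_prod_countable_left (f := fun p : (G → β) × G => shift p.2 p.1)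
    measurable_shift).comp (measurable_id.prodMk hT)

lemma measurable_transportCount (hA : MeasurableSet A) (hT : Measurable T) :
    Measurable (transportCount A T) := by
  rw [transportCount_eq_tsum]
  exact .tsum fun n =>
    measurable_one.indicator (measurableSet_preimage_shift_inter_fiber hA hT n)

lemma setLIntegral_transportCount {μ : Measure (G → β)} (hμ : ∀ n, MeasurePreserving (shift n) μ μ)
    (hA : MeasurableSet A) (hT : Measurable T) {B : Set (G → β)} (hB : MeasurableSet B) :
    ∫⁻ x in B, transportCount A T x ∂μ = μ (A ∩ (fun ω => shift (T ω) ω) ⁻¹' B) := by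
  set C := fun n => shift (-n) ⁻¹' (A ∩ {ω | T ω = n})
  have hC : ∀ n, MeasurableSet (C n) := measurableSet_preimage_shift_inter_fiber hA hT
  have hdecomp : A ∩ (fun ω => shift (T ω) ω) ⁻¹' B = ⋃ n, shift n ⁻¹' (C n ∩ B) := by
    ext ω
    simp [C, shift_neg_shift]
  have hdisj : Pairwise (Disjoint on fun n => shift n ⁻¹' (C n ∩ B)) := by
    intro m n hmn
    refine disjoint_left.mpr fun ω hm hn => hmn ?_
    simp only [C, preimage_inter, mem_inter_iff, mem_preimage, shift_neg_shift, mem_ofPred_eq]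
      at hm hn
    exact hm.1.2.symm.trans hn.1.2
  calc ∫⁻ x in B, transportCount A T x ∂μ
      = ∑' n, ∫⁻ x in B, (C n).indicator 1 x ∂μ := by
        rw [transportCount_eq_tsum,
          lintegral_tsum fun n => (measurable_one.indicator (hC n)).aemeasurable]
    _ = ∑' n, μ (C n ∩ B) := by
        simp only [lintegral_indicator_one (hC _), Measure.restrict_apply (hC _)]
    _ = ∑' n, μ (shift n ⁻¹' (C n ∩ B)) :=
        tsum_congr fun n => ((hμ n).measure_preimage ((hC n).inter hB).nullMeasurableSet).symm
    _ = μ (A ∩ (fun ω => shift (T ω) ω) ⁻¹' B) := by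
        rw [hdecomp, measure_iUnion hdisj fun n => measurable_shift n ((hC n).inter hB)]

end Shift

lemma exists_nat_eq_of_encard_eq_ofReal {α : Type*} {S : Set α} {r : ℝ} (hr : 0 ≤ r)
    (h : (S.encard : ℝ≥0∞) = ENNReal.ofReal r) : ∃ n : ℕ, r = n := by
  have hfin : S.Finite := encard_ne_top_iff.mp fun htop => by simp [htop] at h
  rw [← hfin.cast_ncard_eq] at h
  exact ⟨S.ncard, by simpa [hr] using (congrArg ENNReal.toReal h).symm⟩

/-- **Nonexistence of non-randomized extra head schemes** (necessity in Theorem 1).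
Let `p ∈ (0,1)` with `(1-p)/p` not an integer, let `μ` be the law of a doubly infinite
i.i.d. Bernoulli(p) sequence of coins, and `μ₀` its conditioning on `{ω 0 = false}`.
Then there is no measurable `T : {0,1}^ℤ → ℤ` such that the shift by `T` maps `μ₀` to
`μ` conditioned on `{ω 0 = true}`. -/
theorem no_extra_head_scheme (p : ℝ) (hp0 : 0 < p) (hp1 : p < 1)
    (hpnotint : ¬ ∃ z : ℤ, (1 - p) / p = z)
    (μ : Measure (ℤ → Bool)) [IsProbabilityMeasure μ]
    (hμ : ∀ (s : Finset ℤ) (f : ℤ → Bool),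
      μ {ω | ∀ i ∈ s, ω i = f i}
        = ∏ i ∈ s, (if f i then ENNReal.ofReal p else ENNReal.ofReal (1 - p)))
    (μ₀ : Measure (ℤ → Bool)) (hμ₀ : μ₀ = μ[|{ω | ω 0 = false}]) :
    ¬ ∃ T : (ℤ → Bool) → ℤ, Measurable T ∧
      Measure.map (fun ω (k : ℤ) => ω (T ω + k)) μ₀ = μ[|{ω | ω 0 = true}] := by
  rintro ⟨T, hT, hmap⟩
  set H : Set (ℤ → Bool) := {ω | ω 0 = true}
  set A : Set (ℤ → Bool) := {ω | ω 0 = false}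
  have hHm : MeasurableSet H := measurableSet_eq_fun (measurable_pi_apply 0) measurable_const
  have hAm : MeasurableSet A := measurableSet_eq_fun (measurable_pi_apply 0) measurable_const
  have hshift : ∀ n, MeasurePreserving (shift n) μ μ :=
    measurePreserving_shift (fun b => if b then ENNReal.ofReal p else ENNReal.ofReal (1 - p)) hμ
  have hμH : μ H = ENNReal.ofReal p := by simpa using hμ {0} fun _ => true
  have hμA : μ A = ENNReal.ofReal (1 - p) := by simpa using hμ {0} fun _ => false
  have hdensity : transportCount A T =ᵐ[μ] H.indicator fun _ => ENNReal.ofReal ((1 - p) / p) := by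
    refine ae_eq_of_forall_setLIntegral_eq_of_sigmaFinite (measurable_transportCount hAm hT)
      (measurable_const.indicator hHm) fun B hB _ => ?_
    rw [setLIntegral_transportCount hshift hAm hT hB,
      ← cond_mul_eq_inter hAm, ← hμ₀, ← Measure.map_apply hT.shift_self hB]
    change Measure.map (fun ω k => ω (T ω + k)) μ₀ B * μ A = _
    rw [hmap, cond_apply hHm, lintegral_indicator_const hHm, Measure.restrict_apply hHm, hμH, hμA,
      ENNReal.ofReal_div_of_pos hp0, div_eq_mul_inv]
    ring
  obtain ⟨x, hxH, hx⟩ := Measure.exists_mem_of_measure_ne_zero_of_ae (s := H)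
    (by simp [hμH, hp0]) (ae_restrict_of_ae hdensity)
  rw [indicator_of_mem hxH] at hx
  obtain ⟨n, hn⟩ := exists_nat_eq_of_encard_eq_ofReal (div_nonneg (by linarith) hp0.le) hx
  exact hpnotint ⟨n, by exact_mod_cast hn⟩
end

section
/- Let p ∈ (0,1). Let μ be the product probability measure on {0,1}^ℤ under which the coordinates are i.i.d. Bernoulli(p) (value 1 = heads with probability p), and let μ₀ be μ conditioned on the event {ω : ω(0) = 0}. Then every measurable map T : {0,1}^ℤ → ℕ such that the pushforward of μ₀ under ω ↦ (n ↦ ω(T(ω) + n)) equals μ conditioned on {ω : ω(0) = 1} satisfies ∫ √(T(ω)) dμ₀(ω) = ∞. -/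
/-!
Liggett's argument. Let `μ₁ = μ[|ω 0 = 1]` be the law of the configuration seen from `T`, and
fix a window length `N = n + 1`. Each of the `N` windows `[k - n, k]`, `0 ≤ k ≤ n`, contains the
origin, so under `μ₁` it holds `j + 1` heads with probability larger than under `μ₀` by the
binomial mass `b(n, j)`, which is at least `1 / (6 √N)` for a well chosen `j` (Chebyshev).
On the other hand, shifting by `T` moves the family of these windows by `T`, so the total gain
is at most `∫ min(T, N) dμ₀` (mass transport). Hence `∫ min(T, N) dμ₀ ≥ √N / 6` for every `N`,
which is incompatible with `∫ √T dμ₀ < ∞` by dominated convergence.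
-/

open MeasureTheory ProbabilityTheory Filter Finset
open scoped ENNReal Topology

namespace ExtraHead

section SqrtMoment

variable {Ω : Type*} [MeasurableSpace Ω]

lemma min_mul_inv_sqrt_le_sqrt (t N : ℕ) : (min t N : ℕ) * (√N)⁻¹ ≤ √t := by
  rcases N.eq_zero_or_pos with rfl | hN
  · simp
  rw [mul_inv_le_iff₀ (by positivity)]
  calc ((min t N : ℕ) : ℝ) = √(min t N * min t N : ℕ) := by
        rw [Nat.cast_mul, Real.sqrt_mul_self (by positivity)]
    _ ≤ √(t * N : ℕ) := by gcongr <;> omega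
    _ = √t * √N := by push_cast; exact Real.sqrt_mul (by positivity) _

lemma tendsto_lintegral_min_mul_inv_sqrt (ν : Measure Ω) {T : Ω → ℕ} (hT : Measurable T)
    (hfin : ∫⁻ ω, ENNReal.ofReal √(T ω) ∂ν ≠ ∞) :
    Tendsto (fun N : ℕ => ∫⁻ ω, (min (T ω) N : ℕ) * ENNReal.ofReal (√N)⁻¹ ∂ν) atTop (𝓝 0) := by
  have hinv : Tendsto (fun N : ℕ => ENNReal.ofReal (√N)⁻¹) atTop (𝓝 0) := by
    rw [← ENNReal.ofReal_zero]
    exact ENNReal.tendsto_ofReal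
      (Real.tendsto_sqrt_atTop.comp tendsto_natCast_atTop_atTop).inv_tendsto_atTop
  simpa using tendsto_lintegral_of_dominated_convergence (f := 0)
    (F := fun N ω => (min (T ω) N : ℕ) * ENNReal.ofReal (√N)⁻¹)
    (fun ω => ENNReal.ofReal √(T ω))
    (fun N => ((measurable_from_top (f := fun t : ℕ => ((min t N : ℕ) : ℝ≥0∞))).comp hT).mul_const
      _)
    (fun N => .of_forall fun ω => by
      dsimp only
      rw [← ENNReal.ofReal_natCast, ← ENNReal.ofReal_mul (by positivity)]
      exact ENNReal.ofReal_le_ofReal (min_mul_inv_sqrt_le_sqrt (T ω) N))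
    hfin
    (.of_forall fun ω => by
      have hlim := ENNReal.Tendsto.const_mul hinv (.inr (ENNReal.natCast_ne_top (T ω)))
      rw [mul_zero] at hlim
      refine hlim.congr' ?_
      filter_upwards [eventually_ge_atTop (T ω)] with N hN
      rw [min_eq_left hN])

lemma lintegral_sqrt_eq_top_of_le_lintegral_min (ν : Measure Ω) {T : Ω → ℕ} (hT : Measurable T)
    {c : ℝ} (hc : 0 < c)
    (hle : ∀ᶠ N : ℕ in atTop, ENNReal.ofReal (c * √N) ≤ ∫⁻ ω, (min (T ω) N : ℕ) ∂ν) :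
    ∫⁻ ω, ENNReal.ofReal √(T ω) ∂ν = ∞ := by
  by_contra hfin
  have hc_le : ∀ᶠ N : ℕ in atTop,
      ENNReal.ofReal c ≤ ∫⁻ ω, (min (T ω) N : ℕ) * ENNReal.ofReal (√N)⁻¹ ∂ν := by
    filter_upwards [hle, eventually_ge_atTop 1] with N hN hN1
    have hsqrt : 0 < √(N : ℝ) := Real.sqrt_pos.mpr (by exact_mod_cast hN1)
    rw [lintegral_mul_const' _ _ ENNReal.ofReal_ne_top]
    calc ENNReal.ofReal c = ENNReal.ofReal (c * √N) * ENNReal.ofReal (√N)⁻¹ := by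
          rw [← ENNReal.ofReal_mul (by positivity), mul_inv_cancel_right₀ hsqrt.ne']
      _ ≤ _ := by gcongr
  have := ge_of_tendsto (tendsto_lintegral_min_mul_inv_sqrt ν hT hfin) hc_le
  simp only [nonpos_iff_eq_zero, ENNReal.ofReal_eq_zero] at this
  linarith

end SqrtMoment

lemma sum_range_add_le_add_min (g : ℕ → ℝ≥0∞) (hg : ∀ j, g j ≤ 1) (t N : ℕ) :
    ∑ k ∈ range N, g (t + k) ≤ ∑ k ∈ range N, g k + (min t N : ℕ) := by
  have hsum_le_card :
      ∀ (m : ℕ) (f : ℕ → ℝ≥0∞), (∀ j, f j ≤ 1) → ∑ k ∈ range m, f k ≤ m := by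
    intro m f hf
    simpa using sum_le_card_nsmul (range m) f 1 fun j _ => hf j
  rw [Nat.mono_cast.map_min, ← min_add_add_left]
  refine le_min ?_ ((hsum_le_card N _ fun j => hg _).trans le_add_self)
  calc ∑ k ∈ range N, g (t + k)
      ≤ ∑ k ∈ range t, g k + ∑ k ∈ range N, g (t + k) := le_add_self
    _ = ∑ k ∈ range N, g k + ∑ k ∈ range t, g (N + k) := by
        rw [← sum_range_add, ← sum_range_add, add_comm]
    _ ≤ ∑ k ∈ range N, g k + t := by gcongr; exact hsum_le_card t _ fun j => hg _

section Shift

variable {α : Type*} [MeasurableSpace α]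

def shift (t : ℤ) (ω : ℤ → α) : ℤ → α := fun i => ω (t + i)

omit [MeasurableSpace α] in
lemma shift_shift (s t : ℤ) (ω : ℤ → α) : shift s (shift t ω) = shift (t + s) ω := by
  ext i
  simp only [shift, add_assoc]

lemma measurable_shift (t : ℤ) : Measurable (shift (α := α) t) :=
  measurable_pi_lambda _ fun _ => measurable_pi_apply _

lemma measurable_shift_self {T : (ℤ → α) → ℕ} (hT : Measurable T) :
    Measurable fun ω => shift (T ω) ω :=
  (measurable_from_prod_countable_left (f := fun q : (ℤ → α) × ℕ => shift q.2 q.1)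
    fun t => measurable_shift t).comp (measurable_id.prodMk hT)

/-- Mass transport: for each `ω`, the indices `T ω + k`, `k < N`, differ from `0, …, N - 1`
in at most `min (T ω) N` places. -/
lemma sum_map_shift_self_le (ν : Measure (ℤ → α)) {T : (ℤ → α) → ℕ} (hT : Measurable T)
    {A : Set (ℤ → α)} (hA : MeasurableSet A) (N : ℕ) :
    ∑ k ∈ range N, ν.map (fun ω => shift (T ω) ω) (shift k ⁻¹' A)
      ≤ ∑ k ∈ range N, ν (shift k ⁻¹' A) + ∫⁻ ω, (min (T ω) N : ℕ) ∂ν := by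
  set g : ℕ → (ℤ → α) → ℝ≥0∞ := fun j => (shift j ⁻¹' A).indicator 1
  have hpre : ∀ k : ℕ, MeasurableSet ((fun ω => shift (T ω) ω) ⁻¹' (shift k ⁻¹' A)) :=
    fun k => measurable_shift_self hT (measurable_shift k hA)
  have hmin : Measurable fun ω => ((min (T ω) N : ℕ) : ℝ≥0∞) :=
    (measurable_from_top (f := fun t : ℕ => ((min t N : ℕ) : ℝ≥0∞))).comp hT
  calc ∑ k ∈ range N, ν.map (fun ω => shift (T ω) ω) (shift k ⁻¹' A)
      = ∫⁻ ω, ∑ k ∈ range N,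
          ((fun ω => shift (T ω) ω) ⁻¹' (shift k ⁻¹' A)).indicator 1 ω ∂ν := by
        rw [lintegral_finsetSum _ fun k _ => measurable_one.indicator (hpre k)]
        refine sum_congr rfl fun k _ => ?_
        rw [Measure.map_apply (measurable_shift_self hT) (measurable_shift k hA),
          lintegral_indicator_one (hpre k)]
    _ ≤ ∫⁻ ω, (∑ k ∈ range N, g k ω + (min (T ω) N : ℕ)) ∂ν := by
        refine lintegral_mono fun ω => ?_
        have hshift : ∀ k : ℕ, ((fun ω => shift (T ω) ω) ⁻¹' (shift k ⁻¹' A)).indicator 1 ω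
            = g (T ω + k) ω := fun k => by
          classical
          simp only [g, Set.indicator_apply, Set.mem_preimage, shift_shift, Nat.cast_add]
        simp only [hshift]
        exact sum_range_add_le_add_min (g · ω)
          (fun j => Set.indicator_le_self' (fun _ _ => zero_le_one) ω) (T ω) N
    _ = ∑ k ∈ range N, ν (shift k ⁻¹' A) + ∫⁻ ω, (min (T ω) N : ℕ) ∂ν := by
        rw [lintegral_add_right _ hmin,
          lintegral_finsetSum _ fun k _ => measurable_one.indicator (measurable_shift _ hA)]
        simp only [lintegral_indicator_one (measurable_shift _ hA)]

end Shift

lemma card_le_two_mul_add_one {s : Finset ℕ} {x L : ℝ} (hL : 0 ≤ L)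
    (hs : ∀ ν ∈ s, |(ν : ℝ) - x| ≤ L) : (#s : ℝ) ≤ 2 * L + 1 := by
  rcases s.eq_empty_or_nonempty with rfl | ⟨ν₀, hν₀⟩
  · simp only [card_empty, Nat.cast_zero]
    linarith
  have hsub : s ⊆ Icc ⌈x - L⌉₊ ⌊x + L⌋₊ := fun ν hν => by
    have := abs_le.mp (hs ν hν)
    exact mem_Icc.mpr ⟨Nat.ceil_le.mpr (by linarith), Nat.le_floor (by linarith)⟩
  have hcard : #s + ⌈x - L⌉₊ ≤ ⌊x + L⌋₊ + 1 := by
    have hle := (mem_Icc.mp (hsub hν₀)).1.trans (mem_Icc.mp (hsub hν₀)).2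
    have := card_le_card hsub
    rw [Nat.card_Icc] at this
    omega
  have hpos : 0 ≤ x + L := by
    have := abs_le.mp (hs ν₀ hν₀)
    linarith [Nat.cast_nonneg (α := ℝ) ν₀]
  have hcard' : (#s : ℝ) + ⌈x - L⌉₊ ≤ ⌊x + L⌋₊ + 1 := by exact_mod_cast hcard
  linarith [Nat.floor_le hpos, Nat.le_ceil (x - L)]

/-- Chebyshev's inequality for the binomial law, via the variance identity of the Bernstein
polynomials: half of the mass lies within `√((n + 1) / 2)` of the mean, on at most
`3 √(n + 1)` integers. -/
lemma exists_inv_le_eval_bernsteinPolynomial (n : ℕ) {p : ℝ} (hp0 : 0 ≤ p) (hp1 : p ≤ 1) :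
    ∃ j, 1 / (6 * √(n + 1)) ≤ (bernsteinPolynomial ℝ n j).eval p := by
  set b : ℕ → ℝ := fun ν => (bernsteinPolynomial ℝ n ν).eval p
  have hb_nonneg : ∀ ν, 0 ≤ b ν := fun ν => by
    simp only [b, bernsteinPolynomial, Polynomial.eval_mul, Polynomial.eval_natCast,
      Polynomial.eval_pow, Polynomial.eval_X, Polynomial.eval_sub, Polynomial.eval_one]
    have : 0 ≤ 1 - p := sub_nonneg.mpr hp1
    positivity
  have hb_sum : ∑ ν ∈ range (n + 1), b ν = 1 := by
    simpa [b, Polynomial.eval_finsetSum] using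
      congrArg (Polynomial.eval p) (bernsteinPolynomial.sum ℝ n)
  have hb_var : ∑ ν ∈ range (n + 1), (n * p - ν) ^ 2 * b ν = n * p * (1 - p) := by
    simpa [b, Polynomial.eval_finsetSum] using
      congrArg (Polynomial.eval p) (bernsteinPolynomial.variance ℝ n)
  set r : ℝ := (n + 1) / 2
  set near := (range (n + 1)).filter fun ν : ℕ => (n * p - ν) ^ 2 < r
  set far := (range (n + 1)).filter fun ν : ℕ => ¬(n * p - ν) ^ 2 < r
  have hfar : r * ∑ ν ∈ far, b ν ≤ n * p * (1 - p) := by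
    rw [mul_sum, ← hb_var]
    calc ∑ ν ∈ far, r * b ν
        ≤ ∑ ν ∈ far, (n * p - ν) ^ 2 * b ν :=
          sum_le_sum fun ν hν =>
            mul_le_mul_of_nonneg_right (not_lt.mp (mem_filter.mp hν).2) (hb_nonneg ν)
      _ ≤ ∑ ν ∈ range (n + 1), (n * p - ν) ^ 2 * b ν :=
          sum_le_sum_of_subset_of_nonneg (filter_subset _ _) fun ν _ _ => by
            have := hb_nonneg ν
            positivity
  have hnear : 1 / 2 ≤ ∑ ν ∈ near, b ν := by
    have hsplit :=
      sum_filter_add_sum_filter_not (range (n + 1)) (fun ν : ℕ => (n * p - ν) ^ 2 < r) b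
    have hpq : n * p * (1 - p) ≤ n / 4 := by
      have : p * (1 - p) ≤ 1 / 4 := by nlinarith [sq_nonneg (p - 1 / 2)]
      have := mul_le_mul_of_nonneg_left this (Nat.cast_nonneg (α := ℝ) n)
      linarith
    have : ∑ ν ∈ far, b ν ≤ 1 / 2 := by
      have hr : r * (1 / 2) = (n + 1) / 4 := by ring
      rw [← mul_le_mul_iff_of_pos_left (by positivity : 0 < r)]
      linarith
    linarith
  have hcard : (#near : ℝ) ≤ 3 * √(n + 1) := by
    have hcard := card_le_two_mul_add_one (x := n * p) (Real.sqrt_nonneg r)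
        fun ν (hν : ν ∈ near) => by
      rw [abs_sub_comm]
      exact Real.abs_le_sqrt (mem_filter.mp hν).2.le
    have hr : √r ≤ √(n + 1) := Real.sqrt_le_sqrt (by simp only [r]; linarith)
    have h1 : 1 ≤ √((n : ℝ) + 1) := Real.one_le_sqrt.mpr (by linarith [Nat.cast_nonneg (α := ℝ) n])
    linarith
  obtain ⟨j, -, hj⟩ := exists_le_of_sum_le (f := fun _ => 1 / (6 * √((n : ℝ) + 1))) (g := b)
    (nonempty_of_sum_ne_zero (s := near) (f := b) (by linarith)) <| by
      rw [sum_const, nsmul_eq_mul]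
      calc (#near : ℝ) * (1 / (6 * √(n + 1))) ≤ 3 * √(n + 1) * (1 / (6 * √(n + 1))) := by gcongr
        _ = 1 / 2 := by field_simp; ring
        _ ≤ ∑ ν ∈ near, b ν := hnear
  exact ⟨j, hj⟩

def coinWeight (p : ℝ) (c : Bool) : ℝ≥0∞ :=
  if c then ENNReal.ofReal p else ENNReal.ofReal (1 - p)

lemma coinWeight_ne_zero {p : ℝ} (hp0 : 0 < p) (hp1 : p < 1) (c : Bool) : coinWeight p c ≠ 0 := by
  cases c <;> simp [coinWeight, hp0, hp1]

lemma coinWeight_ne_top (p : ℝ) (c : Bool) : coinWeight p c ≠ ∞ := by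
  cases c <;> simp [coinWeight]

def IsBernoulliProduct (p : ℝ) (μ : Measure (ℤ → Bool)) : Prop :=
  ∀ (s : Finset ℤ) (f : ℤ → Bool), μ {ω | ∀ i ∈ s, ω i = f i} = ∏ i ∈ s, coinWeight p (f i)

lemma measurableSet_cylinder (s : Finset ℤ) (f : ℤ → Bool) :
    MeasurableSet {ω : ℤ → Bool | ∀ i ∈ s, ω i = f i} := by
  have : {ω : ℤ → Bool | ∀ i ∈ s, ω i = f i}
      = s.restrict (π := fun _ => Bool) ⁻¹' {s.restrict f} := by
    ext ω
    simp [funext_iff]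
  rw [this]
  exact measurable_restrict s (measurableSet_singleton _)

lemma measurableSet_coord_eq (i : ℤ) (c : Bool) : MeasurableSet {ω : ℤ → Bool | ω i = c} :=
  show MeasurableSet ((fun ω : ℤ → Bool => ω i) ⁻¹' {c}) from
    measurable_pi_apply i (measurableSet_singleton c)

def heads (S : Finset ℤ) (ω : ℤ → Bool) : Finset ℤ := {i ∈ S | ω i}

lemma heads_subset (S : Finset ℤ) (ω : ℤ → Bool) : heads S ω ⊆ S := filter_subset _ _

lemma heads_eq_iff {S R : Finset ℤ} (hR : R ⊆ S) (ω : ℤ → Bool) :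
    heads S ω = R ↔ ∀ i ∈ S, ω i = decide (i ∈ R) := by
  constructor
  · rintro rfl i hi
    simp [heads, hi]
  · intro h
    ext i
    by_cases hi : i ∈ S
    · simp [heads, hi, h i hi]
    · simp only [heads, mem_filter, hi, false_and, false_iff]
      exact fun hiR => hi (hR hiR)

lemma card_heads_insert {i : ℤ} {S : Finset ℤ} (hi : i ∉ S) (ω : ℤ → Bool) :
    #(heads (insert i S) ω) = #(heads S ω) + (ω i).toNat := by
  cases h : ω i <;> simp [heads, filter_insert, h, hi]

lemma card_heads_shift (S : Finset ℤ) (t : ℤ) (ω : ℤ → Bool) :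
    #(heads S (shift t ω)) = #(heads (S.map (addLeftEmbedding t)) ω) := by
  rw [heads, heads, filter_map, card_map]
  rfl

lemma measurableSet_heads_eq (S R : Finset ℤ) : MeasurableSet {ω | heads S ω = R} := by
  by_cases hR : R ⊆ S
  · simp_rw [heads_eq_iff hR]
    exact measurableSet_cylinder S _
  · convert MeasurableSet.empty
    ext ω
    simp only [Set.mem_ofPred_eq, Set.mem_empty_iff_false, iff_false]
    rintro rfl
    exact hR (heads_subset S ω)

lemma heads_preimage_filter_powerset (S : Finset ℤ) (Q : Finset ℤ → Prop) [DecidablePred Q] :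
    heads S ⁻¹' ↑(S.powerset.filter Q) = {ω | Q (heads S ω)} := by
  ext ω
  simp [heads_subset]

lemma measurableSet_heads_preimage (S : Finset ℤ) (Q : Finset ℤ → Prop) [DecidablePred Q] :
    MeasurableSet {ω | Q (heads S ω)} := by
  rw [← heads_preimage_filter_powerset, ← Finset.set_biUnion_preimage_singleton]
  exact Finset.measurableSet_biUnion _ fun R _ => measurableSet_heads_eq S R

lemma measure_heads_preimage (ν : Measure (ℤ → Bool)) (S : Finset ℤ) (Q : Finset ℤ → Prop)
    [DecidablePred Q] :
    ν {ω | Q (heads S ω)} = ∑ R ∈ S.powerset with Q R, ν {ω | heads S ω = R} := by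
  rw [← heads_preimage_filter_powerset]
  exact (sum_measure_preimage_singleton _ fun R _ => measurableSet_heads_eq S R).symm

namespace IsBernoulliProduct

variable {p : ℝ} {μ : Measure (ℤ → Bool)} (hμ : IsBernoulliProduct p μ)
include hμ

lemma measure_coord_eq (i : ℤ) (c : Bool) : μ {ω | ω i = c} = coinWeight p c := by
  simpa using hμ {i} fun _ => c

lemma measure_coord_inter_cylinder {i : ℤ} {s : Finset ℤ} (hi : i ∉ s) (c : Bool)
    (f : ℤ → Bool) :
    μ ({ω | ω i = c} ∩ {ω | ∀ j ∈ s, ω j = f j})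
      = coinWeight p c * μ {ω | ∀ j ∈ s, ω j = f j} := by
  have : {ω : ℤ → Bool | ω i = c} ∩ {ω | ∀ j ∈ s, ω j = f j}
      = {ω | ∀ j ∈ insert i s, ω j = Function.update f i c j} := by
    ext ω
    simp only [Set.mem_inter_iff, Set.mem_ofPred_eq, mem_insert, forall_eq_or_imp,
      Function.update_self]
    refine and_congr_right fun _ => forall₂_congr fun j hj => ?_
    rw [Function.update_of_ne (ne_of_mem_of_not_mem hj hi)]
  rw [this, hμ, hμ, prod_insert hi, Function.update_self]
  congr 1
  exact prod_congr rfl fun j hj => by rw [Function.update_of_ne (ne_of_mem_of_not_mem hj hi)]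

lemma measure_heads_eq {S R : Finset ℤ} (hR : R ⊆ S) :
    μ {ω | heads S ω = R} = ENNReal.ofReal p ^ #R * ENNReal.ofReal (1 - p) ^ (#S - #R) := by
  simp_rw [heads_eq_iff hR]
  rw [hμ]
  simp only [coinWeight, decide_eq_true_eq]
  rw [prod_ite, prod_const, prod_const, filter_mem_eq_inter, inter_eq_right.mpr hR,
    filter_not, filter_mem_eq_inter, inter_eq_right.mpr hR, card_sdiff_of_subset hR]

lemma measure_card_heads_eq (hp0 : 0 ≤ p) (hp1 : p ≤ 1) (S : Finset ℤ) (j : ℕ) :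
    μ {ω | #(heads S ω) = j} = ENNReal.ofReal ((bernsteinPolynomial ℝ #S j).eval p) := by
  rw [measure_heads_preimage μ S fun R => #R = j, ← powersetCard_eq_filter,
    sum_congr rfl fun R hR => by
      rw [hμ.measure_heads_eq (mem_powersetCard.mp hR).1, (mem_powersetCard.mp hR).2],
    sum_const, card_powersetCard, nsmul_eq_mul]
  rw [bernsteinPolynomial, Polynomial.eval_mul, Polynomial.eval_mul]
  simp only [Polynomial.eval_natCast, Polynomial.eval_pow, Polynomial.eval_X,
    Polynomial.eval_sub, Polynomial.eval_one]
  rw [ENNReal.ofReal_mul (by positivity), ENNReal.ofReal_mul (by positivity),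
    ENNReal.ofReal_natCast, ENNReal.ofReal_pow hp0, ENNReal.ofReal_pow (sub_nonneg.mpr hp1),
    mul_assoc]

lemma cond_heads_preimage (hp0 : 0 < p) (hp1 : p < 1) {i : ℤ} {S : Finset ℤ} (hi : i ∉ S)
    (c : Bool) (Q : Finset ℤ → Prop) [DecidablePred Q] :
    μ[|{ω | ω i = c}] {ω | Q (heads S ω)} = μ {ω | Q (heads S ω)} := by
  rw [measure_heads_preimage, measure_heads_preimage]
  refine sum_congr rfl fun R hR => ?_
  have hRS : R ⊆ S := mem_powerset.mp (mem_filter.mp hR).1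
  rw [cond_apply (measurableSet_coord_eq i c), hμ.measure_coord_eq]
  simp_rw [heads_eq_iff hRS]
  rw [hμ.measure_coord_inter_cylinder hi, ← mul_assoc,
    ENNReal.inv_mul_cancel (coinWeight_ne_zero hp0 hp1 c) (coinWeight_ne_top p c), one_mul]

lemma cond_card_heads_insert (hp0 : 0 < p) (hp1 : p < 1) {i : ℤ} {S : Finset ℤ} (hi : i ∉ S)
    (c : Bool) (Q : ℕ → Prop) [DecidablePred Q] :
    μ[|{ω | ω i = c}] {ω | Q #(heads (insert i S) ω)} = μ {ω | Q (#(heads S ω) + c.toNat)} := by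
  have : {ω : ℤ → Bool | ω i = c} ∩ {ω | Q #(heads (insert i S) ω)}
      = {ω | ω i = c} ∩ {ω | Q (#(heads S ω) + c.toNat)} := by
    ext ω
    simp only [Set.mem_inter_iff, Set.mem_ofPred_eq, card_heads_insert hi]
    exact and_congr_right fun h => by rw [h]
  rw [← cond_inter_self (measurableSet_coord_eq i c), this,
    cond_inter_self (measurableSet_coord_eq i c),
    hμ.cond_heads_preimage hp0 hp1 hi c fun R => Q (#R + c.toNat)]

lemma cond_true_eq_cond_false_add (hp0 : 0 < p) (hp1 : p < 1) {i : ℤ} {S : Finset ℤ}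
    (hi : i ∉ S) (j : ℕ) :
    μ[|{ω | ω i = true}] {ω | j + 1 ≤ #(heads (insert i S) ω)}
      = μ[|{ω | ω i = false}] {ω | j + 1 ≤ #(heads (insert i S) ω)}
        + ENNReal.ofReal ((bernsteinPolynomial ℝ #S j).eval p) := by
  rw [hμ.cond_card_heads_insert hp0 hp1 hi, hμ.cond_card_heads_insert hp0 hp1 hi,
    ← hμ.measure_card_heads_eq hp0.le hp1.le, ← measure_union _
      (measurableSet_heads_preimage S fun R => #R = j)]
  · congr 1
    ext ω
    simp only [Bool.toNat_true, Bool.toNat_false, Set.mem_ofPred_eq, Set.mem_union]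
    omega
  · rw [Set.disjoint_left]
    intro ω h1 h2
    simp only [Bool.toNat_false, Set.mem_ofPred_eq] at h1 h2
    omega

lemma ofReal_succ_mul_eval_le_lintegral_min (hp0 : 0 < p) (hp1 : p < 1)
    {T : (ℤ → Bool) → ℕ} (hT : Measurable T)
    (hembed : (μ[|{ω | ω 0 = false}]).map (fun ω => shift (T ω) ω) = μ[|{ω | ω 0 = true}])
    (n j : ℕ) :
    ENNReal.ofReal ((n + 1) * (bernsteinPolynomial ℝ n j).eval p)
      ≤ ∫⁻ ω, (min (T ω) (n + 1) : ℕ) ∂μ[|{ω | ω 0 = false}] := by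
  set A : Set (ℤ → Bool) := {ω | j + 1 ≤ #(heads (Icc (-n : ℤ) 0) ω)}
  have hwindow : ∀ k ∈ range (n + 1), μ[|{ω | ω 0 = true}] (shift k ⁻¹' A)
      = μ[|{ω | ω 0 = false}] (shift k ⁻¹' A)
        + ENNReal.ofReal ((bernsteinPolynomial ℝ n j).eval p) := by
    intro k hk
    have hkn : k < n + 1 := mem_range.mp hk
    have h0 : (0 : ℤ) ∈ Icc ((k : ℤ) - n) k := mem_Icc.mpr ⟨by omega, by omega⟩
    have hA : shift k ⁻¹' A
        = {ω | j + 1 ≤ #(heads (insert 0 ((Icc ((k : ℤ) - n) k).erase 0)) ω)} := by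
      ext ω
      simp only [A, Set.mem_preimage, Set.mem_ofPred_eq, card_heads_shift, map_add_left_Icc,
        insert_erase h0, add_zero, ← sub_eq_add_neg]
    have hcard : #((Icc ((k : ℤ) - n) k).erase 0) = n := by
      rw [card_erase_of_mem h0, Int.card_Icc]
      omega
    rw [hA, hμ.cond_true_eq_cond_false_add hp0 hp1 (notMem_erase 0 _), hcard]
  have htransport := sum_map_shift_self_le (μ[|{ω | ω 0 = false}]) hT
    (measurableSet_heads_preimage (Icc (-n : ℤ) 0) fun R => j + 1 ≤ #R) (n + 1)
  rw [hembed, sum_congr rfl hwindow, sum_add_distrib, sum_const, card_range, nsmul_eq_mul]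
    at htransport
  rw [ENNReal.ofReal_mul (by positivity),
    show ((n : ℝ) + 1) = ((n + 1 : ℕ) : ℝ) by push_cast; rfl, ENNReal.ofReal_natCast]
  exact ENNReal.le_of_add_le_add_left (ENNReal.sum_ne_top.mpr fun k _ => measure_ne_top _ _)
    htransport

end IsBernoulliProduct

end ExtraHead

theorem extra_head_sqrt_moment_infinite_general (p : ℝ) (hp0 : 0 < p) (hp1 : p < 1)
    (μ : Measure (ℤ → Bool))
    (hμ : ∀ (s : Finset ℤ) (f : ℤ → Bool),
      μ {ω | ∀ i ∈ s, ω i = f i}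
        = ∏ i ∈ s, (if f i then ENNReal.ofReal p else ENNReal.ofReal (1 - p)))
    (μ₀ : Measure (ℤ → Bool)) (hμ₀ : μ₀ = μ[|{ω | ω 0 = false}])
    (T : (ℤ → Bool) → ℕ) (hTmeas : Measurable T)
    (hembed : Measure.map (fun ω (k : ℤ) => ω ((T ω : ℤ) + k)) μ₀
      = μ[|{ω | ω 0 = true}]) :
    ∫⁻ ω, ENNReal.ofReal (Real.sqrt (T ω)) ∂μ₀ = ⊤ := by
  subst hμ₀
  have hμ' : ExtraHead.IsBernoulliProduct p μ := hμ
  refine ExtraHead.lintegral_sqrt_eq_top_of_le_lintegral_min _ hTmeas (c := 1 / 6)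
    (by norm_num) ?_
  filter_upwards [eventually_ge_atTop 1] with N hN
  obtain ⟨n, rfl⟩ := Nat.exists_eq_add_of_le' hN
  obtain ⟨j, hj⟩ := ExtraHead.exists_inv_le_eval_bernsteinPolynomial n hp0.le hp1.le
  refine le_trans (ENNReal.ofReal_le_ofReal ?_)
    (hμ'.ofReal_succ_mul_eval_le_lintegral_min hp0 hp1 hTmeas hembed n j)
  calc 1 / 6 * √((n + 1 : ℕ) : ℝ) = (n + 1) * (1 / (6 * √((n : ℝ) + 1))) := by
        push_cast
        field_simp
        rw [Real.sq_sqrt (by positivity)]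
    _ ≤ (n + 1) * (bernsteinPolynomial ℝ n j).eval p := by gcongr

/-- **Every non-negative extra head scheme has infinite square-root moment**
(instance of Theorems 3(i) and 4).  Let `p ∈ (0,1)`, let `μ` be the law of a doubly
infinite i.i.d. Bernoulli(p) sequence of coins, and `μ₀` its conditioning on
`{ω 0 = false}`.  If `T : {0,1}^ℤ → ℕ` is measurable and the shift by `T` maps `μ₀` to
`μ` conditioned on `{ω 0 = true}`, then `∫ √T dμ₀ = ∞`. -/
theorem extra_head_sqrt_moment_infinite (p : ℝ) (hp0 : 0 < p) (hp1 : p < 1)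
    (μ : Measure (ℤ → Bool)) [IsProbabilityMeasure μ]
    (hμ : ∀ (s : Finset ℤ) (f : ℤ → Bool),
      μ {ω | ∀ i ∈ s, ω i = f i}
        = ∏ i ∈ s, (if f i then ENNReal.ofReal p else ENNReal.ofReal (1 - p)))
    (μ₀ : Measure (ℤ → Bool)) (hμ₀ : μ₀ = μ[|{ω | ω 0 = false}])
    (T : (ℤ → Bool) → ℕ) (hTmeas : Measurable T)
    (hembed : Measure.map (fun ω (k : ℤ) => ω ((T ω : ℤ) + k)) μ₀
      = μ[|{ω | ω 0 = true}]) :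
    ∫⁻ ω, ENNReal.ofReal (Real.sqrt (T ω)) ∂μ₀ = ⊤ :=
  extra_head_sqrt_moment_infinite_general p hp0 hp1 μ hμ μ₀ hμ₀ T hTmeas hembed
end

section
/- Let a : ℕ → [0,∞) be nondecreasing and subadditive (a(m+n) ≤ a(m) + a(n) for all m, n), let S₁, S₂, …, Sₙ be independent identically distributed random variables taking values in ℕ, and let 0 < β ≤ α ≤ 1. Then E[a(S₁ + ⋯ + Sₙ)^β] ≤ n^{β/α} · (E[a(S₁)^α])^{β/α}. -/
open MeasureTheory ProbabilityTheory
open scoped ENNReal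

/-!
Pointwise, subadditivity of `a` and of `x ↦ x ^ α` for `α ≤ 1` give
`a(S₁ + ⋯ + Sₙ)^α ≤ a(S₁)^α + ⋯ + a(Sₙ)^α`; taking expectations and using that the `Sᵢ` are
identically distributed bounds `E[a(S₁ + ⋯ + Sₙ)^α]` by `n · E[a(S₁)^α]`. Jensen's inequality
for the concave map `x ↦ x^{β/α}` (equivalently, monotonicity of `Lᵖ` norms on a probability
space) then passes from the `α`-th to the `β`-th moment.
-/

lemma ENNReal.ofReal_rpow_add_le_of_subadditive {M : Type*} [Add M] {a : M → ℝ}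
    (hsub : ∀ x y, a (x + y) ≤ a x + a y) {p : ℝ} (hp : 0 ≤ p) (hp1 : p ≤ 1) (x y : M) :
    ENNReal.ofReal (a (x + y)) ^ p ≤ ENNReal.ofReal (a x) ^ p + ENNReal.ofReal (a y) ^ p :=
  calc ENNReal.ofReal (a (x + y)) ^ p
      ≤ (ENNReal.ofReal (a x) + ENNReal.ofReal (a y)) ^ p := by
        gcongr
        exact (ENNReal.ofReal_le_ofReal (hsub x y)).trans ENNReal.ofReal_add_le
    _ ≤ _ := ENNReal.rpow_add_le_add_rpow _ _ hp hp1

lemma ENNReal.ofReal_rpow_sum_le_of_subadditive {M ι : Type*} [AddCommMonoid M] {a : M → ℝ}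
    (hsub : ∀ x y, a (x + y) ≤ a x + a y) {p : ℝ} (hp : 0 ≤ p) (hp1 : p ≤ 1)
    {s : Finset ι} (hs : s.Nonempty) (x : ι → M) :
    ENNReal.ofReal (a (∑ i ∈ s, x i)) ^ p ≤ ∑ i ∈ s, ENNReal.ofReal (a (x i)) ^ p :=
  Finset.le_sum_nonempty_of_subadditive (fun m ↦ ENNReal.ofReal (a m) ^ p)
    (ENNReal.ofReal_rpow_add_le_of_subadditive hsub hp hp1) hs x

lemma lintegral_rpow_le_lintegral_rpow_rpow {Ω : Type*} [MeasurableSpace Ω] {μ : Measure Ω}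
    [IsProbabilityMeasure μ] {f : Ω → ℝ≥0∞} (hf : AEMeasurable f μ) {p q : ℝ} (hp : 0 < p)
    (hpq : p ≤ q) :
    ∫⁻ ω, f ω ^ p ∂μ ≤ (∫⁻ ω, f ω ^ q ∂μ) ^ (p / q) := by
  have hnorm := eLpNorm'_le_eLpNorm'_of_exponent_le hp hpq μ hf.aestronglyMeasurable
  simp only [eLpNorm'_eq_lintegral_enorm, enorm_eq_self] at hnorm
  calc ∫⁻ ω, f ω ^ p ∂μ = ((∫⁻ ω, f ω ^ p ∂μ) ^ (1 / p)) ^ p := by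
        rw [← ENNReal.rpow_mul, one_div_mul_cancel hp.ne', ENNReal.rpow_one]
    _ ≤ ((∫⁻ ω, f ω ^ q ∂μ) ^ (1 / q)) ^ p := by gcongr
    _ = (∫⁻ ω, f ω ^ q ∂μ) ^ (p / q) := by rw [← ENNReal.rpow_mul, one_div_mul_eq_div]

lemma lintegral_sum_comp_eq_card_mul_of_identDistrib {Ω E ι : Type*} [MeasurableSpace Ω]
    [MeasurableSpace E] {μ : Measure Ω} {X : ι → Ω → E} {s : Finset ι} {j : ι}
    (hident : ∀ i ∈ s, IdentDistrib (X i) (X j) μ μ) {h : E → ℝ≥0∞} (hh : Measurable h) :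
    ∫⁻ ω, ∑ i ∈ s, h (X i ω) ∂μ = s.card * ∫⁻ ω, h (X j ω) ∂μ := by
  calc ∫⁻ ω, ∑ i ∈ s, h (X i ω) ∂μ = ∑ i ∈ s, ∫⁻ ω, h (X i ω) ∂μ :=
        lintegral_finsetSum' _ fun i hi ↦ hh.comp_aemeasurable (hident i hi).aemeasurable_fst
    _ = ∑ i ∈ s, ∫⁻ ω, h (X j ω) ∂μ :=
        Finset.sum_congr rfl fun i hi ↦ ((hident i hi).comp hh).lintegral_eq
    _ = s.card * ∫⁻ ω, h (X j ω) ∂μ := by rw [Finset.sum_const, nsmul_eq_mul]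

theorem subadditive_green_moment_bound_general
    {Ω : Type*} [MeasurableSpace Ω] (μ : Measure Ω) [IsProbabilityMeasure μ]
    (a : ℕ → ℝ) (ha0 : ∀ k, 0 ≤ a k)
    (hsub : ∀ j k : ℕ, a (j + k) ≤ a j + a k)
    (S : ℕ → Ω → ℕ)
    (hident : ∀ i, IdentDistrib (S i) (S 0) μ μ)
    (n : ℕ) (hn : 1 ≤ n)
    (α β : ℝ) (hβ : 0 < β) (hβα : β ≤ α) (hα : α ≤ 1) :
    ∫⁻ ω, ENNReal.ofReal (a (∑ i ∈ Finset.range n, S i ω) ^ β) ∂μ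
      ≤ (n : ℝ≥0∞) ^ (β / α)
        * (∫⁻ ω, ENNReal.ofReal (a (S 0 ω) ^ α) ∂μ) ^ (β / α) := by
  have hα0 : 0 < α := hβ.trans_le hβα
  have hofReal_rpow (k : ℕ) {p : ℝ} (hp : 0 ≤ p) :
      ENNReal.ofReal (a k ^ p) = ENNReal.ofReal (a k) ^ p :=
    (ENNReal.ofReal_rpow_of_nonneg (ha0 k) hp).symm
  have hsum_meas : AEMeasurable (fun ω ↦ ∑ i ∈ Finset.range n, S i ω) μ :=
    Finset.aemeasurable_fun_sum _ fun i _ ↦ (hident i).aemeasurable_fst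
  simp only [hofReal_rpow _ hβ.le, hofReal_rpow _ hα0.le]
  calc ∫⁻ ω, ENNReal.ofReal (a (∑ i ∈ Finset.range n, S i ω)) ^ β ∂μ
      ≤ (∫⁻ ω, ENNReal.ofReal (a (∑ i ∈ Finset.range n, S i ω)) ^ α ∂μ) ^ (β / α) :=
        lintegral_rpow_le_lintegral_rpow_rpow
          ((measurable_from_top (f := fun k : ℕ ↦ ENNReal.ofReal (a k))).comp_aemeasurable
            hsum_meas) hβ hβα
    _ ≤ (∫⁻ ω, ∑ i ∈ Finset.range n, ENNReal.ofReal (a (S i ω)) ^ α ∂μ) ^ (β / α) := by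
        gcongr with ω
        exact ENNReal.ofReal_rpow_sum_le_of_subadditive hsub hα0.le hα
          (Finset.nonempty_range_iff.mpr (by omega)) _
    _ = ((n : ℝ≥0∞) * ∫⁻ ω, ENNReal.ofReal (a (S 0 ω)) ^ α ∂μ) ^ (β / α) := by
        rw [lintegral_sum_comp_eq_card_mul_of_identDistrib (fun i _ ↦ hident i)
          (measurable_from_top (f := fun k : ℕ ↦ ENNReal.ofReal (a k) ^ α)), Finset.card_range]
    _ = _ := ENNReal.mul_rpow_of_nonneg _ _ (div_pos hβ hα0).le

/-- **Key moment estimate in the proof of Theorem 3(ii)**.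
Let `a : ℕ → [0,∞)` be nondecreasing and subadditive, let `S 0, …, S (n-1)` be i.i.d.
`ℕ`-valued random variables and `0 < β ≤ α ≤ 1`.  Then
`E[a(S 0 + ⋯ + S (n-1))^β] ≤ n^{β/α} · (E[a(S 0)^α])^{β/α}`. -/
theorem subadditive_green_moment_bound
    {Ω : Type*} [MeasurableSpace Ω] (μ : Measure Ω) [IsProbabilityMeasure μ]
    (a : ℕ → ℝ) (ha0 : ∀ k, 0 ≤ a k) (hmono : Monotone a)
    (hsub : ∀ j k : ℕ, a (j + k) ≤ a j + a k)
    (S : ℕ → Ω → ℕ) (hmeas : ∀ i, Measurable (S i))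
    (hindep : iIndepFun S μ)
    (hident : ∀ i, IdentDistrib (S i) (S 0) μ μ)
    (n : ℕ) (hn : 1 ≤ n)
    (α β : ℝ) (hβ : 0 < β) (hβα : β ≤ α) (hα : α ≤ 1) :
    ∫⁻ ω, ENNReal.ofReal (a (∑ i ∈ Finset.range n, S i ω) ^ β) ∂μ
      ≤ (n : ℝ≥0∞) ^ (β / α)
        * (∫⁻ ω, ENNReal.ofReal (a (S 0 ω) ^ α) ∂μ) ^ (β / α) :=
  subadditive_green_moment_bound_general μ a ha0 hsub S hident n hn α β hβ hβα hα
end
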